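/- arXiv:2103.16075 — 12 statements merged into one kernel-verified Lean document; each statement's English description precedes it below -/
import Mathlib

section
/- Let ρ be the standard normal density ρ(x) = (2π)^{-1/2} exp(-x²/2) with CDF Φ, and let ψ(x) = exp(-x²/(2α)) for α > 0. Then ∫_{-∞}^c (Φ(t))²/ψ(t) dt < ∞ and ∫_c^∞ (1-Φ(t))²/ψ(t) dt < ∞ for all finite c if and only if α ≥ 1/2. -/
/-!
Write `Q(s) = ∫_s^∞ φ` for the standard Gaussian tail, so that `1 - Φ = Q` and
`Φ(t) = Q(-t)`; since `ψ` is even, both conditions say that `Q² / ψ` is integrable on every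
half-line `[c, ∞)`. Mills' bound `Q(s) ≤ φ(s) / s` gives
`Q(s)² / ψ(s) ≤ e^{s²/(2α) - s²} / (2π s²)`, integrable at `∞` when `2α ≥ 1`. Conversely
`Q(s) ≥ φ(s + 1)` for `s ≥ 0` gives `Q(s)² / ψ(s) ≥ e^{s²/(2α) - (s+1)²} / (2π)`, which tends
to `∞` when `2α < 1`.
-/

open MeasureTheory Real Set Filter Topology ProbabilityTheory

lemma gaussianPDFReal_zero_one (x : ℝ) :
    gaussianPDFReal 0 1 x = (√(2 * π))⁻¹ * exp (-x ^ 2 / 2) := by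
  simp [gaussianPDFReal]

lemma gaussianPDFReal_zero_neg (v : NNReal) (x : ℝ) :
    gaussianPDFReal 0 v (-x) = gaussianPDFReal 0 v x := by
  simp [gaussianPDFReal]

lemma antitoneOn_gaussianPDFReal_zero_one : AntitoneOn (gaussianPDFReal 0 1) (Ici 0) := by
  intro x hx y _ hxy
  simp only [gaussianPDFReal_zero_one]
  gcongr

lemma hasDerivAt_gaussianPDFReal_zero_one (x : ℝ) :
    HasDerivAt (gaussianPDFReal 0 1) (-(x * gaussianPDFReal 0 1 x)) x := by
  have h : HasDerivAt (fun y : ℝ => -y ^ 2 / 2) (-x) x :=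
    ((hasDerivAt_pow 2 x).fun_neg.div_const 2).congr_deriv (by push_cast; ring)
  rw [show gaussianPDFReal 0 1 = fun y => (√(2 * π))⁻¹ * exp (-y ^ 2 / 2) from
    funext gaussianPDFReal_zero_one]
  exact (h.exp.const_mul _).congr_deriv (by ring)

lemma tendsto_gaussianPDFReal_zero_one_atTop : Tendsto (gaussianPDFReal 0 1) atTop (𝓝 0) := by
  have h : Tendsto (fun x : ℝ => -x ^ 2 / 2) atTop atBot :=
    (tendsto_neg_atTop_atBot.comp (tendsto_pow_atTop two_ne_zero)).atBot_div_const two_pos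
  simpa [funext gaussianPDFReal_zero_one] using
    (tendsto_exp_atBot.comp h).const_mul (√(2 * π))⁻¹

lemma integrable_mul_gaussianPDFReal_zero_one :
    Integrable (fun x => x * gaussianPDFReal 0 1 x) := by
  have h := (integrable_mul_exp_neg_mul_sq (b := 1 / 2) (by norm_num)).const_mul (√(2 * π))⁻¹
  refine h.congr (ae_of_all _ fun x => ?_)
  simp only [gaussianPDFReal_zero_one]
  ring_nf

lemma integral_Ioi_mul_gaussianPDFReal_zero_one (s : ℝ) :
    ∫ x in Ioi s, x * gaussianPDFReal 0 1 x = gaussianPDFReal 0 1 s := by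
  have h := integral_Ioi_of_hasDerivAt_of_tendsto' (a := s) (m := 0)
    (f := fun x => -gaussianPDFReal 0 1 x) (f' := fun x => x * gaussianPDFReal 0 1 x)
    (fun x _ => by simpa using (hasDerivAt_gaussianPDFReal_zero_one x).fun_neg)
    integrable_mul_gaussianPDFReal_zero_one.integrableOn
    (by simpa using tendsto_gaussianPDFReal_zero_one_atTop.neg)
  simpa using h

noncomputable def gaussianTail (s : ℝ) : ℝ := ∫ x in Ioi s, gaussianPDFReal 0 1 x

lemma gaussianTail_nonneg (s : ℝ) : 0 ≤ gaussianTail s :=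
  setIntegral_nonneg measurableSet_Ioi fun x _ => gaussianPDFReal_nonneg 0 1 x

lemma gaussianTail_le_one (s : ℝ) : gaussianTail s ≤ 1 := by
  rw [gaussianTail, ← integral_gaussianPDFReal_eq_one 0 one_ne_zero]
  exact setIntegral_le_integral (integrable_gaussianPDFReal 0 1)
    (ae_of_all _ (gaussianPDFReal_nonneg 0 1))

lemma antitone_gaussianTail : Antitone gaussianTail := fun _ _ hab =>
  setIntegral_mono_set (integrable_gaussianPDFReal 0 1).integrableOn
    (ae_of_all _ (gaussianPDFReal_nonneg 0 1)) (Ioi_subset_Ioi hab).eventuallyLE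

lemma one_sub_integral_Iic_gaussianPDFReal (t : ℝ) :
    1 - ∫ x in Iic t, gaussianPDFReal 0 1 x = gaussianTail t := by
  rw [← integral_gaussianPDFReal_eq_one 0 one_ne_zero, gaussianTail,
    ← intervalIntegral.integral_Iic_add_Ioi (integrable_gaussianPDFReal 0 1).integrableOn
      (integrable_gaussianPDFReal 0 1).integrableOn]
  ring

lemma integral_Iic_gaussianPDFReal (t : ℝ) :
    ∫ x in Iic t, gaussianPDFReal 0 1 x = gaussianTail (-t) := by
  simp_rw [gaussianTail, ← integral_comp_neg_Iic, gaussianPDFReal_zero_neg]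

lemma gaussianTail_le_div (s : ℝ) (hs : 0 < s) :
    gaussianTail s ≤ gaussianPDFReal 0 1 s / s := by
  -- On `Ioi s` we have `1 ≤ x / s`, and `x φ(x) = -φ'(x)` integrates explicitly.
  calc gaussianTail s ≤ ∫ x in Ioi s, s⁻¹ * (x * gaussianPDFReal 0 1 x) := by
        refine setIntegral_mono_on (integrable_gaussianPDFReal 0 1).integrableOn
          (integrable_mul_gaussianPDFReal_zero_one.const_mul _).integrableOn measurableSet_Ioi
          fun x hx => ?_
        rw [← mul_assoc, le_mul_iff_one_le_left (gaussianPDFReal_pos 0 1 x one_ne_zero),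
          inv_mul_eq_div, one_le_div hs]
        exact le_of_lt hx
    _ = gaussianPDFReal 0 1 s / s := by
        rw [integral_const_mul, integral_Ioi_mul_gaussianPDFReal_zero_one, inv_mul_eq_div]

lemma gaussianPDFReal_add_one_le_gaussianTail (s : ℝ) (hs : 0 ≤ s) :
    gaussianPDFReal 0 1 (s + 1) ≤ gaussianTail s := by
  calc gaussianPDFReal 0 1 (s + 1) = ∫ _ in Ioc s (s + 1), gaussianPDFReal 0 1 (s + 1) := by
        simp
    _ ≤ ∫ x in Ioc s (s + 1), gaussianPDFReal 0 1 x :=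
        setIntegral_mono_on (integrableOn_const measure_Ioc_lt_top.ne)
          (integrable_gaussianPDFReal 0 1).integrableOn measurableSet_Ioc fun x hx =>
            antitoneOn_gaussianPDFReal_zero_one (hs.trans hx.1.le) (by simp; linarith) hx.2
    _ ≤ gaussianTail s :=
        setIntegral_mono_set (integrable_gaussianPDFReal 0 1).integrableOn
          (ae_of_all _ (gaussianPDFReal_nonneg 0 1)) Ioc_subset_Ioi_self.eventuallyLE

lemma gaussianPDFReal_zero_one_sq (x : ℝ) :
    gaussianPDFReal 0 1 x ^ 2 = (2 * π)⁻¹ * exp (-x ^ 2) := by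
  rw [gaussianPDFReal_zero_one, mul_pow, inv_pow, sq_sqrt (by positivity), ← exp_nat_mul]
  ring_nf

lemma not_integrableOn_Ici_of_tendsto_atTop {f : ℝ → ℝ} (hf : Tendsto f atTop atTop)
    (c : ℝ) :
    ¬ IntegrableOn f (Ici c) := by
  intro hint
  obtain ⟨T, hT⟩ := eventually_atTop.1 (hf.eventually_ge_atTop 1)
  have hone : IntegrableOn (fun _ => (1 : ℝ)) (Ici (max c T)) := by
    refine Integrable.mono' (hint.mono_set (Ici_subset_Ici.2 (le_max_left c T)))
      aestronglyMeasurable_const ?_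
    filter_upwards [ae_restrict_mem measurableSet_Ici] with x hx
    simpa using hT x ((le_max_right c T).trans hx)
  simp [integrableOn_const_iff] at hone

lemma integrableOn_Icc_gaussianTail_sq_div (α a b : ℝ) :
    IntegrableOn (fun s => gaussianTail s ^ 2 / exp (-s ^ 2 / (2 * α))) (Icc a b) := by
  refine Integrable.mono' (g := fun s => (exp (-s ^ 2 / (2 * α)))⁻¹)
    (Continuous.integrableOn_Icc ((by fun_prop : Continuous fun s => exp (-s ^ 2 / (2 * α))).inv₀
      fun s => (exp_pos _).ne'))
    ((antitone_gaussianTail.measurable.pow_const 2).div (by fun_prop)).aestronglyMeasurable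
    (ae_of_all _ fun s => ?_)
  rw [norm_of_nonneg (div_nonneg (sq_nonneg _) (exp_pos _).le), div_eq_mul_inv]
  exact mul_le_of_le_one_left (by positivity)
    (pow_le_one₀ (gaussianTail_nonneg s) (gaussianTail_le_one s))

lemma integrableOn_Ioi_inv_sq : IntegrableOn (fun s : ℝ => (s ^ 2)⁻¹) (Ioi 1) :=
  (integrableOn_Ioi_rpow_of_lt (a := -2) (by norm_num) one_pos).congr_fun
    (fun s hs => by dsimp only; rw [rpow_neg (one_pos.trans hs).le, rpow_two]) measurableSet_Ioi

lemma integrableOn_Ici_gaussianTail_sq_div {α : ℝ} (hα : 1 / 2 ≤ α) (c : ℝ) :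
    IntegrableOn (fun s => gaussianTail s ^ 2 / exp (-s ^ 2 / (2 * α))) (Ici c) := by
  have hbound : ∀ s > (0 : ℝ),
      gaussianTail s ^ 2 / exp (-s ^ 2 / (2 * α)) ≤ (2 * π)⁻¹ * (s ^ 2)⁻¹ := fun s hs =>
    calc gaussianTail s ^ 2 / exp (-s ^ 2 / (2 * α))
        ≤ (gaussianPDFReal 0 1 s / s) ^ 2 / exp (-s ^ 2 / (2 * α)) := by
          gcongr
          exacts [gaussianTail_nonneg s, gaussianTail_le_div s hs]
      _ = (2 * π)⁻¹ * (s ^ 2)⁻¹ * exp (-s ^ 2 - -s ^ 2 / (2 * α)) := by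
          rw [div_pow, gaussianPDFReal_zero_one_sq, exp_sub]
          ring
      _ ≤ (2 * π)⁻¹ * (s ^ 2)⁻¹ := by
          refine mul_le_of_le_one_right (by positivity) (exp_le_one_iff.2 ?_)
          have : s ^ 2 / (2 * α) ≤ s ^ 2 := div_le_self (sq_nonneg s) (by linarith)
          linarith [neg_div (2 * α) (s ^ 2)]
  have htail : IntegrableOn (fun s => gaussianTail s ^ 2 / exp (-s ^ 2 / (2 * α))) (Ioi 1) := by
    refine Integrable.mono' (integrableOn_Ioi_inv_sq.const_mul (2 * π)⁻¹)
      ((antitone_gaussianTail.measurable.pow_const 2).div (by fun_prop)).aestronglyMeasurable ?_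
    filter_upwards [ae_restrict_mem measurableSet_Ioi] with s hs
    rw [norm_of_nonneg (div_nonneg (sq_nonneg _) (exp_pos _).le)]
    exact hbound s (one_pos.trans hs)
  refine ((integrableOn_Icc_gaussianTail_sq_div α c 1).union htail).mono_set fun s hs => ?_
  rcases le_or_gt s 1 with h | h
  exacts [Or.inl ⟨hs, h⟩, Or.inr h]

lemma tendsto_gaussianTail_sq_div {α : ℝ} (hα₀ : 0 < α) (hα : α < 1 / 2) :
    Tendsto (fun s => gaussianTail s ^ 2 / exp (-s ^ 2 / (2 * α))) atTop atTop := by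
  set k := (2 * α)⁻¹ - 1
  have hk : 0 < k := sub_pos.2 ((one_lt_inv₀ (by positivity)).2 (by linarith))
  have hexponent : Tendsto (fun s : ℝ => s ^ 2 / (2 * α) - (s + 1) ^ 2) atTop atTop := by
    refine tendsto_atTop_mono' _ ?_ tendsto_id
    filter_upwards [eventually_ge_atTop 1, eventually_ge_atTop (4 / k)] with s hs₁ hsk
    have hks : 4 ≤ k * s := by rwa [div_le_iff₀' hk] at hsk
    have hsq : s ^ 2 / (2 * α) = (k + 1) * s ^ 2 := by
      simp only [k]
      ring
    rw [id, hsq]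
    nlinarith
  refine tendsto_atTop_mono' _ ?_
    ((tendsto_exp_atTop.comp hexponent).const_mul_atTop (by positivity : (0 : ℝ) < (2 * π)⁻¹))
  filter_upwards [eventually_ge_atTop 0] with s hs
  calc (2 * π)⁻¹ * exp (s ^ 2 / (2 * α) - (s + 1) ^ 2)
      = gaussianPDFReal 0 1 (s + 1) ^ 2 / exp (-s ^ 2 / (2 * α)) := by
        rw [gaussianPDFReal_zero_one_sq, mul_div_assoc, ← exp_sub]
        ring_nf
    _ ≤ gaussianTail s ^ 2 / exp (-s ^ 2 / (2 * α)) := by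
        gcongr
        exacts [gaussianPDFReal_nonneg 0 1 _, gaussianPDFReal_add_one_le_gaussianTail s hs]

theorem stmt2 (α : ℝ) (hα : 0 < α) (ρ Φ ψ : ℝ → ℝ)
    (hρ : ∀ x, ρ x = (Real.sqrt (2 * π))⁻¹ * Real.exp (-x ^ 2 / 2))
    (hΦ : ∀ x, Φ x = ∫ t in Iic x, ρ t)
    (hψ : ∀ x, ψ x = Real.exp (-x ^ 2 / (2 * α))) :
    (∀ c : ℝ, IntegrableOn (fun t => Φ t ^ 2 / ψ t) (Iic c) ∧
        IntegrableOn (fun t => (1 - Φ t) ^ 2 / ψ t) (Ici c)) ↔ 1 / 2 ≤ α := by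
  obtain rfl : ρ = gaussianPDFReal 0 1 :=
    funext fun x => (hρ x).trans (gaussianPDFReal_zero_one x).symm
  set g := fun s => gaussianTail s ^ 2 / exp (-s ^ 2 / (2 * α))
  have hleft : (fun t => Φ t ^ 2 / ψ t) = fun t => g (-t) := by
    ext t
    simp [g, hΦ, hψ, integral_Iic_gaussianPDFReal]
  have hright : (fun t => (1 - Φ t) ^ 2 / ψ t) = g := by
    ext t
    simp [g, hΦ, hψ, one_sub_integral_Iic_gaussianPDFReal]
  rw [hleft, hright]
  refine ⟨fun h => ?_, fun h c => ?_⟩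
  · by_contra! hlt
    exact not_integrableOn_Ici_of_tendsto_atTop (tendsto_gaussianTail_sq_div hα hlt) 0 (h 0).2
  · exact ⟨(integrableOn_Ici_gaussianTail_sq_div h (-c)).comp_neg_Iic,
      integrableOn_Ici_gaussianTail_sq_div h c⟩
end

section
/- Let ρ be a strictly positive probability density on ℝ with CDF Φ, and ψ strictly positive, locally integrable with 1/ψ locally integrable, satisfying the weaker condition ∫_{-∞}^c (Φ(t))²/ψ(t) dt < ∞ and ∫_c^∞ (1-Φ(t))²/ψ(t) dt < ∞ for all finite c. If f : ℝ → ℝ is absolutely continuous on compact intervals with ∫|f| ρ < ∞ and ∫ |f'|² ψ < ∞, then f(x) Φ(x) → 0 as x → -∞. -/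
/-!
For `x ≤ y` we have `|f x| ≤ |f y| + ∫_x^y |f'|`, and `Φ` is nondecreasing, so
`Φ x |f x| ≤ Φ y |f y| + ∫_{-∞}^y Φ |f'|`. The weighted AM-GM inequality
`Φ |f'| ≤ (Φ² / ψ + f'² ψ) / 2` makes `Φ |f'|` integrable near `-∞`, so the last term tends to `0`
as `y → -∞`. It remains to find points `y` far to the left with `Φ y |f y|` small: if
`Φ |f| ≥ ε` on `(-∞, c]`, then `|f| ≥ ε / Φ c` there, whence `∫_{-∞}^c |f| ρ ≥ ε`, which fails for
`c` close enough to `-∞` because `|f| ρ` is integrable.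
-/

open MeasureTheory Real Set Filter Topology

theorem tendsto_setIntegral_Iic_atBot {E : Type*} [NormedAddCommGroup E] [NormedSpace ℝ E]
    {g : ℝ → E} {c : ℝ} (hg : IntegrableOn g (Iic c)) :
    Tendsto (fun b => ∫ t in Iic b, g t) atBot (𝓝 0) := by
  have h := tendsto_setIntegral_of_antitone (μ := volume) (f := g)
    (s := fun b : ℝᵒᵈ => Iic (OrderDual.ofDual b)) (fun _ => measurableSet_Iic)
    (fun _ _ hab => Iic_subset_Iic.2 hab) ⟨OrderDual.toDual c, hg⟩
  have hempty : ⋂ b : ℝᵒᵈ, Iic (OrderDual.ofDual b) = ∅ :=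
    iInter_Iic_eq_empty_iff.2 (by simp)
  rwa [hempty, Measure.restrict_empty, integral_zero_measure] at h

theorem abs_mul_le_sq_div_add_sq_mul {a b w : ℝ} (hw : 0 < w) :
    |a * b| ≤ (a ^ 2 / w + b ^ 2 * w) / 2 := by
  have hsq : 0 ≤ (|a| - |b| * w) ^ 2 / w := by positivity
  have hexpand : (|a| - |b| * w) ^ 2 / w = a ^ 2 / w + b ^ 2 * w - 2 * |a * b| := by
    rw [abs_mul]
    field_simp
    linear_combination sq_abs a + w ^ 2 * sq_abs b
  linarith

theorem MeasureTheory.Integrable.mul_of_sq_div_of_sq_mul {α : Type*} [MeasurableSpace α]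
    {μ : Measure α} {u v w : α → ℝ} (hw : ∀ x, 0 < w x) (hu : Integrable (fun x => u x ^ 2 / w x) μ)
    (hv : Integrable (fun x => v x ^ 2 * w x) μ)
    (huv : AEStronglyMeasurable (fun x => u x * v x) μ) :
    Integrable (fun x => u x * v x) μ :=
  ((hu.add hv).div_const 2).mono' huv
    (ae_of_all _ fun x => abs_mul_le_sq_div_add_sq_mul (hw x))

theorem monotone_setIntegral_Iic {ρ : ℝ → ℝ} (hρ : ∀ x, 0 ≤ ρ x) (hρint : Integrable ρ) :
    Monotone fun x => ∫ t in Iic x, ρ t := fun _ _ hab =>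
  setIntegral_mono_set hρint.integrableOn (ae_of_all _ hρ) (Iic_subset_Iic.2 hab).eventuallyLE

section

variable {Φ f f' : ℝ → ℝ}

theorem mul_abs_le_add_intervalIntegral (hΦ : Monotone Φ) (hΦnn : ∀ x, 0 ≤ Φ x) {x y : ℝ}
    (hxy : x ≤ y) (hAC : f y - f x = ∫ t in x..y, f' t) (hf' : IntervalIntegrable f' volume x y)
    (hΦf' : IntervalIntegrable (fun t => Φ t * |f' t|) volume x y) :
    Φ x * |f x| ≤ Φ y * |f y| + ∫ t in x..y, Φ t * |f' t| := by
  have hfx : |f x| ≤ |f y| + ∫ t in x..y, |f' t| := by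
    calc |f x| = |f y - ∫ t in x..y, f' t| := by rw [← hAC, sub_sub_cancel]
      _ ≤ |f y| + |∫ t in x..y, f' t| := abs_sub _ _
      _ ≤ |f y| + ∫ t in x..y, |f' t| := by
        gcongr; exact intervalIntegral.abs_integral_le_integral_abs hxy
  have hweight : Φ x * ∫ t in x..y, |f' t| ≤ ∫ t in x..y, Φ t * |f' t| := by
    rw [← intervalIntegral.integral_const_mul]
    exact intervalIntegral.integral_mono_on hxy (hf'.abs.const_mul _) hΦf'
      fun t ht => mul_le_mul_of_nonneg_right (hΦ ht.1) (abs_nonneg _)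
  calc Φ x * |f x| ≤ Φ x * |f y| + Φ x * ∫ t in x..y, |f' t| := by
        rw [← mul_add]; exact mul_le_mul_of_nonneg_left hfx (hΦnn x)
    _ ≤ Φ y * |f y| + ∫ t in x..y, Φ t * |f' t| :=
        add_le_add (mul_le_mul_of_nonneg_right (hΦ hxy) (abs_nonneg _)) hweight

theorem frequently_mul_abs_lt_atBot {ρ : ℝ → ℝ} (hρ : ∀ x, 0 ≤ ρ x) (hρint : Integrable ρ)
    (hΦ : ∀ x, Φ x = ∫ t in Iic x, ρ t) (hΦmono : Monotone Φ)
    (hfρ : Integrable (fun x => |f x| * ρ x)) {ε : ℝ} (hε : 0 < ε) :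
    ∃ᶠ x in atBot, Φ x * |f x| < ε := by
  intro hlarge
  simp only [not_lt] at hlarge
  have htail : ∀ᶠ c in atBot, ε ≤ ∫ t in Iic c, |f t| * ρ t := by
    rcases eventually_atBot.1 hlarge with ⟨c₀, hc₀⟩
    filter_upwards [eventually_le_atBot c₀] with c hc
    have hΦc : 0 < Φ c := by
      by_contra! h
      have := hc₀ c hc
      nlinarith [abs_nonneg (f c)]
    have hpoint : ∀ t ∈ Iic c, ε * ρ t ≤ Φ c * (|f t| * ρ t) := fun t ht => by
      rw [← mul_assoc]
      exact mul_le_mul_of_nonneg_right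
        ((hc₀ t (ht.out.trans hc)).trans (by gcongr; exact hΦmono ht.out)) (hρ t)
    have hint := setIntegral_mono_on (hρint.integrableOn.const_mul ε)
      (hfρ.integrableOn.const_mul (Φ c)) measurableSet_Iic hpoint
    rw [integral_const_mul, integral_const_mul, ← hΦ, mul_comm] at hint
    exact le_of_mul_le_mul_left hint hΦc
  have hsmall := (tendsto_setIntegral_Iic_atBot (c := 0) hfρ.integrableOn).eventually_lt_const hε
  obtain ⟨c, hle, hlt⟩ := (htail.and hsmall).exists
  exact hle.not_gt hlt

theorem tendsto_mul_atBot_zero_of_frequently (hΦ : Monotone Φ) (hΦnn : ∀ x, 0 ≤ Φ x)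
    (hf' : LocallyIntegrable f') (hAC : ∀ a b, f b - f a = ∫ t in a..b, f' t) {c : ℝ}
    (hint : IntegrableOn (fun t => Φ t * |f' t|) (Iic c))
    (hfreq : ∀ ε > 0, ∃ᶠ x in atBot, Φ x * |f x| < ε) :
    Tendsto (fun x => f x * Φ x) atBot (𝓝 0) := by
  rw [NormedAddGroup.tendsto_nhds_zero]
  intro ε hε
  obtain ⟨c', hc'c, hc'⟩ := ((eventually_le_atBot c).and
    ((tendsto_setIntegral_Iic_atBot hint).eventually_lt_const (half_pos hε))).exists
  obtain ⟨y, hy, hyc'⟩ := ((hfreq _ (half_pos hε)).and_eventually (eventually_le_atBot c')).exists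
  filter_upwards [eventually_le_atBot y] with x hxy
  have hint' : IntegrableOn (fun t => Φ t * |f' t|) (Iic c') :=
    hint.mono_set (Iic_subset_Iic.2 hc'c)
  have hsub : Ioc x y ⊆ Iic c' := fun t ht => ht.2.trans hyc'
  calc ‖f x * Φ x‖ = Φ x * |f x| := by rw [norm_mul, norm_of_nonneg (hΦnn x), mul_comm]; rfl
    _ ≤ Φ y * |f y| + ∫ t in x..y, Φ t * |f' t| :=
        mul_abs_le_add_intervalIntegral hΦ hΦnn hxy (hAC x y)
          (hf'.integrableOn_isCompact isCompact_uIcc).intervalIntegrable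
          ((intervalIntegrable_iff_integrableOn_Ioc_of_le hxy).2 (hint'.mono_set hsub))
    _ ≤ Φ y * |f y| + ∫ t in Iic c', Φ t * |f' t| := by
        rw [intervalIntegral.integral_of_le hxy]
        exact add_le_add_right (setIntegral_mono_set hint'
          (ae_of_all _ fun t => mul_nonneg (hΦnn t) (abs_nonneg _)) hsub.eventuallyLE) _
    _ < ε / 2 + ε / 2 := by gcongr
    _ = ε := add_halves ε

end

theorem stmt5_general (ρ ψ Φ : ℝ → ℝ)
    (hρpos : ∀ x, 0 < ρ x) (hρint : Integrable ρ)
    (hψpos : ∀ x, 0 < ψ x)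
    (hΦ : ∀ x, Φ x = ∫ t in Iic x, ρ t)
    (hweak : ∀ c : ℝ, IntegrableOn (fun t => Φ t ^ 2 / ψ t) (Iic c) ∧
        IntegrableOn (fun t => (1 - Φ t) ^ 2 / ψ t) (Ici c))
    (f f' : ℝ → ℝ)
    (hf'loc : LocallyIntegrable f')
    (hAC : ∀ a b : ℝ, f b - f a = ∫ t in a..b, f' t)
    (hfL1 : Integrable (fun x => |f x| * ρ x))
    (hf'L2 : Integrable (fun x => f' x ^ 2 * ψ x)) :
    Tendsto (fun x => f x * Φ x) atBot (nhds 0) := by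
  have hρnn : ∀ x, 0 ≤ ρ x := fun x => (hρpos x).le
  have hΦmono : Monotone Φ := by
    simpa only [← funext hΦ] using monotone_setIntegral_Iic hρnn hρint
  have hΦnn : ∀ x, 0 ≤ Φ x := fun x =>
    hΦ x ▸ setIntegral_nonneg measurableSet_Iic fun t _ => hρnn t
  have hint : IntegrableOn (fun t => Φ t * |f' t|) (Iic 0) :=
    (hweak 0).1.mul_of_sq_div_of_sq_mul hψpos
      (by simpa only [sq_abs] using hf'L2.restrict)
      (hΦmono.measurable.aestronglyMeasurable.mul
        (continuous_abs.comp_aestronglyMeasurable hf'loc.aestronglyMeasurable)).restrict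
  exact tendsto_mul_atBot_zero_of_frequently hΦmono hΦnn hf'loc hAC hint
    fun ε hε => frequently_mul_abs_lt_atBot hρnn hρint hΦ hΦmono hfL1 hε

theorem stmt5 (ρ ψ Φ : ℝ → ℝ)
    (hρpos : ∀ x, 0 < ρ x) (hρint : Integrable ρ) (hρ1 : ∫ x, ρ x = 1)
    (hψpos : ∀ x, 0 < ψ x)
    (hψloc : LocallyIntegrable ψ)
    (hψinvloc : LocallyIntegrable (fun x => 1 / ψ x))
    (hΦ : ∀ x, Φ x = ∫ t in Iic x, ρ t)
    (hweak : ∀ c : ℝ, IntegrableOn (fun t => Φ t ^ 2 / ψ t) (Iic c) ∧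
        IntegrableOn (fun t => (1 - Φ t) ^ 2 / ψ t) (Ici c))
    (f f' : ℝ → ℝ)
    (hf'loc : LocallyIntegrable f')
    (hAC : ∀ a b : ℝ, f b - f a = ∫ t in a..b, f' t)
    (hfL1 : Integrable (fun x => |f x| * ρ x))
    (hf'L2 : Integrable (fun x => f' x ^ 2 * ψ x)) :
    Tendsto (fun x => f x * Φ x) atBot (nhds 0) :=
  stmt5_general ρ ψ Φ hρpos hρint hψpos hΦ hweak f f' hf'loc hAC hfL1 hf'L2
end

section
/- Under the same hypotheses (weaker condition on (ρ,ψ); f ∈ L¹_ρ absolutely continuous with f' ∈ L²_ψ), f(x)(1 - Φ(x)) → 0 as x → +∞. -/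
open MeasureTheory Set Filter Topology
open scoped ENNReal

/-!
Write `G = 1 - Φ`, the tail mass of `ρ`. For `t > x`, `|f x| ≤ ∫_x^t |f'| + |f t|`; integrating
against `ρ t` over `t > x` and exchanging the order of integration gives
`|f x| G x ≤ ∫_x^∞ |f'| G + ∫_x^∞ |f| ρ`. By AM-GM with weight `ψ`, `|f'| G ≤ f'² ψ + G² / ψ`,
which is integrable near `+∞` by the hypotheses, so both terms are tails of convergent integrals.
-/

lemma tendsto_setLIntegral_Ioi_atTop_zero {g : ℝ → ℝ≥0∞} {a : ℝ} (hg : ∫⁻ t in Ioi a, g t ≠ ∞) :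
    Tendsto (fun x => ∫⁻ t in Ioi x, g t) atTop (𝓝 0) := by
  have h := tendsto_measure_iInter_atTop (μ := volume.withDensity g) (s := Ioi)
    (fun _ => measurableSet_Ioi.nullMeasurableSet) (fun _ _ hxy => Ioi_subset_Ioi hxy)
    ⟨a, by rwa [withDensity_apply _ measurableSet_Ioi]⟩
  have hempty : ⋂ x : ℝ, Ioi x = ∅ :=
    eq_empty_of_forall_notMem fun y hy => lt_irrefl y (mem_iInter.1 hy y)
  rw [hempty, measure_empty] at h
  simpa only [Function.comp_def, withDensity_apply _ measurableSet_Ioi] using h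

lemma lintegral_Ioi_lintegral_Ioo_mul {g r : ℝ → ℝ≥0∞} (hg : AEMeasurable g)
    (hr : AEMeasurable r) (x : ℝ) :
    ∫⁻ t in Ioi x, (∫⁻ s in Ioo x t, g s) * r t = ∫⁻ s in Ioi x, g s * ∫⁻ t in Ioi s, r t := by
  set F : ℝ → ℝ → ℝ≥0∞ := fun t s =>
    {p : ℝ × ℝ | p.2 < p.1}.indicator (fun p => g p.2 * r p.1) (t, s)
  have hF_left : ∀ t s, F t s = (Iio t).indicator g s * r t := by
    intro t s; by_cases h : s < t <;> simp [F, h]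
  have hF_right : ∀ t s, F t s = g s * (Ioi s).indicator r t := by
    intro t s; by_cases h : s < t <;> simp [F, h]
  have hF : AEMeasurable (Function.uncurry F)
      ((volume.restrict (Ioi x)).prod (volume.restrict (Ioi x))) :=
    ((hg.restrict.comp_snd).mul hr.restrict.comp_fst).indicator
      (measurableSet_lt measurable_snd measurable_fst)
  calc ∫⁻ t in Ioi x, (∫⁻ s in Ioo x t, g s) * r t
      = ∫⁻ t in Ioi x, ∫⁻ s in Ioi x, F t s := by
        refine lintegral_congr fun t => ?_
        simp only [hF_left]
        rw [lintegral_mul_const'' _ (hg.indicator measurableSet_Iio).restrict,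
          lintegral_indicator measurableSet_Iio, Measure.restrict_restrict measurableSet_Iio,
          Iio_inter_Ioi]
    _ = ∫⁻ s in Ioi x, ∫⁻ t in Ioi x, F t s := lintegral_lintegral_swap hF
    _ = ∫⁻ s in Ioi x, g s * ∫⁻ t in Ioi s, r t := by
        refine setLIntegral_congr_fun measurableSet_Ioi fun s hs => ?_
        simp only [hF_right]
        rw [lintegral_const_mul'' _ (hr.indicator measurableSet_Ioi).restrict,
          lintegral_indicator measurableSet_Ioi, Measure.restrict_restrict measurableSet_Ioi,
          Ioi_inter_Ioi, sup_eq_left.2 (le_of_lt hs)]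

section AbsolutelyContinuous

variable {f f' : ℝ → ℝ}

lemma continuous_of_forall_sub_eq_intervalIntegral (hf' : LocallyIntegrable f')
    (hAC : ∀ a b : ℝ, f b - f a = ∫ t in a..b, f' t) : Continuous f := by
  have hf : f = fun x => f 0 + ∫ t in (0 : ℝ)..x, f' t := funext fun x => by linarith [hAC 0 x]
  rw [hf]
  exact continuous_const.add (intervalIntegral.continuous_primitive
    (fun a b => (hf'.integrableOn_isCompact isCompact_uIcc).intervalIntegrable) 0)

lemma enorm_sub_le_lintegral_Ioo (hAC : ∀ a b : ℝ, f b - f a = ∫ t in a..b, f' t) {x t : ℝ}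
    (hxt : x ≤ t) : ‖f t - f x‖ₑ ≤ ∫⁻ s in Ioo x t, ‖f' s‖ₑ := by
  rw [hAC, intervalIntegral.integral_of_le hxt, integral_Ioc_eq_integral_Ioo]
  exact enorm_integral_le_lintegral_enorm _

lemma enorm_mul_lintegral_Ioi_le (hAC : ∀ a b : ℝ, f b - f a = ∫ t in a..b, f' t)
    (hf : AEMeasurable f) (hf' : AEMeasurable f') {r : ℝ → ℝ≥0∞} (hr : AEMeasurable r)
    (x : ℝ) :
    ‖f x‖ₑ * ∫⁻ t in Ioi x, r t ≤
      (∫⁻ s in Ioi x, ‖f' s‖ₑ * ∫⁻ t in Ioi s, r t) + ∫⁻ t in Ioi x, ‖f t‖ₑ * r t := by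
  calc ‖f x‖ₑ * ∫⁻ t in Ioi x, r t
      = ∫⁻ t in Ioi x, ‖f x‖ₑ * r t := (lintegral_const_mul'' _ hr.restrict).symm
    _ ≤ ∫⁻ t in Ioi x, ((∫⁻ s in Ioo x t, ‖f' s‖ₑ) * r t + ‖f t‖ₑ * r t) := by
        refine setLIntegral_mono' measurableSet_Ioi fun t ht => ?_
        rw [← add_mul]
        gcongr
        calc ‖f x‖ₑ = ‖(f x - f t) + f t‖ₑ := by rw [sub_add_cancel]
          _ ≤ ‖f x - f t‖ₑ + ‖f t‖ₑ := enorm_add_le _ _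
          _ ≤ _ := by
            rw [enorm_sub_rev]
            gcongr
            exact enorm_sub_le_lintegral_Ioo hAC (le_of_lt ht)
    _ = _ := by
        rw [lintegral_add_right' _ (g := fun t => ‖f t‖ₑ * r t) (hf.enorm.mul hr).restrict,
          lintegral_Ioi_lintegral_Ioo_mul hf'.enorm hr]

end AbsolutelyContinuous

lemma enorm_mul_le_enorm_sq_mul_add_sq_div (a b : ℝ) {p : ℝ} (hp : 0 < p) :
    ‖a‖ₑ * ‖b‖ₑ ≤ ‖a ^ 2 * p + b ^ 2 / p‖ₑ := by
  have h : a ^ 2 * p + b ^ 2 / p = (a ^ 2 * p ^ 2 + b ^ 2) / p := by field_simp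
  rw [← enorm_mul, enorm_le_iff_norm_le, Real.norm_eq_abs, Real.norm_eq_abs, abs_mul, h,
    abs_of_nonneg (by positivity : (0 : ℝ) ≤ (a ^ 2 * p ^ 2 + b ^ 2) / p), le_div_iff₀ hp]
  nlinarith [sq_nonneg (|a| * p - |b|), sq_abs a, sq_abs b, abs_nonneg a, abs_nonneg b]

lemma one_sub_setIntegral_Iic {ρ : ℝ → ℝ} (hρ : Integrable ρ) (hρ1 : ∫ x, ρ x = 1) (x : ℝ) :
    1 - ∫ t in Iic x, ρ t = ∫ t in Ioi x, ρ t := by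
  rw [← hρ1, ← integral_add_compl measurableSet_Iic hρ, compl_Iic, add_sub_cancel_left]

lemma enorm_integral_eq_lintegral_enorm_of_nonneg {α : Type*} [MeasurableSpace α]
    {μ : Measure α} {g : α → ℝ} (hg : Integrable g μ) (hg0 : 0 ≤ g) :
    ‖∫ a, g a ∂μ‖ₑ = ∫⁻ a, ‖g a‖ₑ ∂μ := by
  rw [Real.enorm_eq_ofReal (integral_nonneg hg0), lintegral_enorm_of_nonneg hg0,
    ofReal_integral_eq_lintegral_ofReal hg (ae_of_all _ hg0)]

theorem stmt6_general (ρ ψ Φ : ℝ → ℝ)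
    (hρpos : ∀ x, 0 < ρ x) (hρint : Integrable ρ) (hρ1 : ∫ x, ρ x = 1)
    (hψpos : ∀ x, 0 < ψ x)
    (hΦ : ∀ x, Φ x = ∫ t in Iic x, ρ t)
    (hweak : ∀ c : ℝ, IntegrableOn (fun t => Φ t ^ 2 / ψ t) (Iic c) ∧
        IntegrableOn (fun t => (1 - Φ t) ^ 2 / ψ t) (Ici c))
    (f f' : ℝ → ℝ)
    (hf'loc : LocallyIntegrable f')
    (hAC : ∀ a b : ℝ, f b - f a = ∫ t in a..b, f' t)
    (hfL1 : Integrable (fun x => |f x| * ρ x))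
    (hf'L2 : Integrable (fun x => f' x ^ 2 * ψ x)) :
    Tendsto (fun x => f x * (1 - Φ x)) atTop (nhds 0) := by
  have htail : ∀ s, ‖1 - Φ s‖ₑ = ∫⁻ t in Ioi s, ‖ρ t‖ₑ := fun s => by
    rw [hΦ, one_sub_setIntegral_Iic hρint hρ1,
      enorm_integral_eq_lintegral_enorm_of_nonneg hρint.integrableOn fun t => (hρpos t).le]
  have hf : Continuous f := continuous_of_forall_sub_eq_intervalIntegral hf'loc hAC
  set h : ℝ → ℝ := fun s => f' s ^ 2 * ψ s + (1 - Φ s) ^ 2 / ψ s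
  have hbound : ∀ x, ‖f x * (1 - Φ x)‖ₑ ≤
      (∫⁻ s in Ioi x, ‖h s‖ₑ) + ∫⁻ t in Ioi x, ‖f t‖ₑ * ‖ρ t‖ₑ := fun x => calc
    ‖f x * (1 - Φ x)‖ₑ = ‖f x‖ₑ * ∫⁻ t in Ioi x, ‖ρ t‖ₑ := by rw [enorm_mul, htail]
    _ ≤ (∫⁻ s in Ioi x, ‖f' s‖ₑ * ∫⁻ t in Ioi s, ‖ρ t‖ₑ) + ∫⁻ t in Ioi x, ‖f t‖ₑ * ‖ρ t‖ₑ :=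
        enorm_mul_lintegral_Ioi_le hAC hf.aemeasurable
          hf'loc.aestronglyMeasurable.aemeasurable hρint.aemeasurable.enorm x
    _ ≤ _ := by
        simp only [← htail]
        gcongr with s
        exact enorm_mul_le_enorm_sq_mul_add_sq_div _ _ (hψpos s)
  have hlim : Tendsto (fun x => (∫⁻ s in Ioi x, ‖h s‖ₑ) + ∫⁻ t in Ioi x, ‖f t‖ₑ * ‖ρ t‖ₑ)
      atTop (𝓝 0) := by
    have hh : IntegrableOn h (Ioi 0) :=
      hf'L2.integrableOn.add ((hweak 0).2.mono_set Ioi_subset_Ici_self)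
    have hfρ : ∫⁻ t in Ioi 0, ‖f t‖ₑ * ‖ρ t‖ₑ ≠ ∞ := by
      simpa only [enorm_mul, Real.enorm_abs] using (hfL1.integrableOn (s := Ioi 0)).2.ne
    simpa only [add_zero] using (tendsto_setLIntegral_Ioi_atTop_zero hh.2.ne).add
      (tendsto_setLIntegral_Ioi_atTop_zero hfρ)
  exact tendsto_zero_iff_enorm_tendsto_zero.2 <|
    tendsto_of_tendsto_of_tendsto_of_le_of_le tendsto_const_nhds hlim (fun _ => zero_le) hbound

theorem stmt6 (ρ ψ Φ : ℝ → ℝ)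
    (hρpos : ∀ x, 0 < ρ x) (hρint : Integrable ρ) (hρ1 : ∫ x, ρ x = 1)
    (hψpos : ∀ x, 0 < ψ x)
    (hψloc : LocallyIntegrable ψ)
    (hψinvloc : LocallyIntegrable (fun x => 1 / ψ x))
    (hΦ : ∀ x, Φ x = ∫ t in Iic x, ρ t)
    (hweak : ∀ c : ℝ, IntegrableOn (fun t => Φ t ^ 2 / ψ t) (Iic c) ∧
        IntegrableOn (fun t => (1 - Φ t) ^ 2 / ψ t) (Ici c))
    (f f' : ℝ → ℝ)
    (hf'loc : LocallyIntegrable f')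
    (hAC : ∀ a b : ℝ, f b - f a = ∫ t in a..b, f' t)
    (hfL1 : Integrable (fun x => |f x| * ρ x))
    (hf'L2 : Integrable (fun x => f' x ^ 2 * ψ x)) :
    Tendsto (fun x => f x * (1 - Φ x)) atTop (nhds 0) :=
  stmt6_general ρ ψ Φ hρpos hρint hρ1 hψpos hΦ hweak f f' hf'loc hAC hfL1 hf'L2
end

section
/- Define η(x,y) = ∫_{-∞}^{min(x,y)} Φ(t)²/ψ(t) dt + ∫_{max(x,y)}^∞ (1-Φ(t))²/ψ(t) dt - ∫_{min(x,y)}^{max(x,y)} Φ(t)(1-Φ(t))/ψ(t) dt. Then for every y ∈ ℝ, ∫_{-∞}^∞ η(x,y) ρ(x) dx = 0, assuming the weaker condition holds. -/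
/-!
Put `h(t, x) = Φ(t) - 1{x < t}`. The three pieces of `η` combine to
`η(x, y) = ∫ h(t, x) h(t, y) / ψ(t) dt`, while `∫ h(t, x) ρ(x) dx = Φ(t) - Φ(t) = 0` for every `t`,
so the claim follows by exchanging the order of integration. Fubini applies because
`∫ |h(t, x)| ρ(x) dx = 2 Φ(t) (1 - Φ(t))` and `|h(t, y)| Φ(t) (1 - Φ(t))` is at most `Φ(t)²` for
`t ≤ y` and at most `(1 - Φ(t))²` for `t > y`, both integrable against `1 / ψ` by the weak condition.
-/

open MeasureTheory Real Set

noncomputable def densityCDF (ρ : ℝ → ℝ) (x : ℝ) : ℝ := ∫ t in Iic x, ρ t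

noncomputable def centeredStep (Φ : ℝ → ℝ) (t x : ℝ) : ℝ := Φ t - (Iio t).indicator 1 x

section densityCDF

variable {ρ : ℝ → ℝ}

theorem setIntegral_Iio_eq_densityCDF (x : ℝ) : ∫ t in Iio x, ρ t = densityCDF ρ x :=
  integral_Iic_eq_integral_Iio.symm

theorem densityCDF_nonneg (hρ0 : ∀ x, 0 ≤ ρ x) (x : ℝ) : 0 ≤ densityCDF ρ x :=
  setIntegral_nonneg measurableSet_Iic fun t _ => hρ0 t

theorem monotone_densityCDF (hρ0 : ∀ x, 0 ≤ ρ x) (hρint : Integrable ρ) :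
    Monotone (densityCDF ρ) := fun _ _ hab =>
  setIntegral_mono_set hρint.integrableOn (.of_forall hρ0) (Iic_subset_Iic.mpr hab).eventuallyLE

theorem densityCDF_le_one (hρ0 : ∀ x, 0 ≤ ρ x) (hρint : Integrable ρ) (hρ1 : ∫ x, ρ x = 1)
    (x : ℝ) : densityCDF ρ x ≤ 1 :=
  hρ1 ▸ setIntegral_le_integral hρint (.of_forall hρ0)

theorem setIntegral_Ici_eq_one_sub_densityCDF (hρint : Integrable ρ) (hρ1 : ∫ x, ρ x = 1)
    (x : ℝ) : ∫ t in Ici x, ρ t = 1 - densityCDF ρ x := by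
  have := integral_add_compl (measurableSet_Iio (a := x)) hρint
  rw [compl_Iio, hρ1, setIntegral_Iio_eq_densityCDF] at this
  linarith

end densityCDF

section centeredStep

variable {Φ : ℝ → ℝ} {t x : ℝ}

theorem centeredStep_of_le (h : t ≤ x) : centeredStep Φ t x = Φ t := by
  simp [centeredStep, not_lt.mpr h]

theorem centeredStep_of_lt (h : x < t) : centeredStep Φ t x = Φ t - 1 := by
  simp [centeredStep, h]

theorem measurable_uncurry_centeredStep (hΦ : Measurable Φ) :
    Measurable (Function.uncurry (centeredStep Φ)) := by
  have : Function.uncurry (centeredStep Φ) =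
      fun p : ℝ × ℝ => Φ p.1 - {p : ℝ × ℝ | p.2 < p.1}.indicator 1 p := by
    ext ⟨t, x⟩; rfl
  rw [this]
  exact (hΦ.comp measurable_fst).sub
    (measurable_const.indicator (measurableSet_lt measurable_snd measurable_fst))

theorem measurable_centeredStep_left (hΦ : Measurable Φ) (x : ℝ) :
    Measurable fun t => centeredStep Φ t x :=
  (measurable_uncurry_centeredStep hΦ).comp (measurable_id.prodMk measurable_const)

theorem centeredStep_mul_min_max (y : ℝ) :
    centeredStep Φ t (min x y) * centeredStep Φ t (max x y) =
      centeredStep Φ t x * centeredStep Φ t y := by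
  rcases le_total x y with h | h
  · rw [min_eq_left h, max_eq_right h]
  · rw [min_eq_right h, max_eq_left h, mul_comm]

end centeredStep

section kernelIntegrals

variable {ρ : ℝ → ℝ}

theorem centeredStep_mul_eq_sub_indicator (Φ : ℝ → ℝ) (t x : ℝ) :
    centeredStep Φ t x * ρ x = Φ t * ρ x - (Iio t).indicator ρ x := by
  by_cases hx : x < t
  · simp [centeredStep, hx, sub_mul]
  · simp [centeredStep, hx]

theorem integrable_centeredStep_mul (hρint : Integrable ρ) (Φ : ℝ → ℝ) (t : ℝ) :
    Integrable fun x => centeredStep Φ t x * ρ x := by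
  simp_rw [centeredStep_mul_eq_sub_indicator]
  exact (hρint.const_mul _).sub (hρint.indicator measurableSet_Iio)

theorem integral_centeredStep_densityCDF_mul (hρint : Integrable ρ) (hρ1 : ∫ x, ρ x = 1)
    (t : ℝ) : ∫ x, centeredStep (densityCDF ρ) t x * ρ x = 0 := by
  simp_rw [centeredStep_mul_eq_sub_indicator]
  rw [integral_sub (hρint.const_mul _) (hρint.indicator measurableSet_Iio), integral_const_mul,
    hρ1, integral_indicator measurableSet_Iio, setIntegral_Iio_eq_densityCDF, mul_one, sub_self]

theorem integral_abs_centeredStep_densityCDF_mul (hρ0 : ∀ x, 0 ≤ ρ x) (hρint : Integrable ρ)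
    (hρ1 : ∫ x, ρ x = 1) (t : ℝ) :
    ∫ x, |centeredStep (densityCDF ρ) t x| * ρ x =
      2 * (densityCDF ρ t * (1 - densityCDF ρ t)) := by
  set Φ := densityCDF ρ
  have hsplit : (fun x => |centeredStep Φ t x| * ρ x) = fun x =>
      (Iio t).indicator (fun x => (1 - Φ t) * ρ x) x + (Ici t).indicator (fun x => Φ t * ρ x) x := by
    ext x
    rcases lt_or_ge x t with hx | hx
    · rw [centeredStep_of_lt hx, abs_of_nonpos (by linarith [densityCDF_le_one hρ0 hρint hρ1 t])]
      simp [hx, not_le.mpr hx]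
    · rw [centeredStep_of_le hx, abs_of_nonneg (densityCDF_nonneg hρ0 t)]
      simp [Φ, hx, not_lt.mpr hx]
  rw [hsplit, integral_add ((hρint.const_mul _).indicator measurableSet_Iio)
      ((hρint.const_mul _).indicator measurableSet_Ici),
    integral_indicator measurableSet_Iio, integral_indicator measurableSet_Ici,
    integral_const_mul, integral_const_mul, setIntegral_Iio_eq_densityCDF,
    setIntegral_Ici_eq_one_sub_densityCDF hρint hρ1]
  ring

end kernelIntegrals

theorem integral_centeredStep_mul_centeredStep_div {Φ ψ : ℝ → ℝ} {a b : ℝ} (hab : a ≤ b)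
    (hleft : IntegrableOn (fun t => Φ t ^ 2 / ψ t) (Iic a))
    (hmid : IntegrableOn (fun t => Φ t * (1 - Φ t) / ψ t) (Ioc a b))
    (hright : IntegrableOn (fun t => (1 - Φ t) ^ 2 / ψ t) (Ici b)) :
    ∫ t, centeredStep Φ t a * centeredStep Φ t b / ψ t =
      (∫ t in Iic a, Φ t ^ 2 / ψ t) + (∫ t in Ici b, (1 - Φ t) ^ 2 / ψ t)
        - ∫ t in a..b, Φ t * (1 - Φ t) / ψ t := by
  set g := fun t => centeredStep Φ t a * centeredStep Φ t b / ψ t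
  have eq_left : EqOn g (fun t => Φ t ^ 2 / ψ t) (Iic a) := fun t (ht : t ≤ a) => by
    simp only [g, centeredStep_of_le ht, centeredStep_of_le (ht.trans hab), sq]
  have eq_mid : EqOn g (fun t => -(Φ t * (1 - Φ t) / ψ t)) (Ioc a b) := fun t ht => by
    simp only [g, centeredStep_of_lt ht.1, centeredStep_of_le ht.2]
    ring
  have eq_right : EqOn g (fun t => (1 - Φ t) ^ 2 / ψ t) (Ioi b) := fun t (ht : b < t) => by
    simp only [g, centeredStep_of_lt ht, centeredStep_of_lt (hab.trans_lt ht)]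
    ring
  have int_left : IntegrableOn g (Iic a) := hleft.congr_fun eq_left.symm measurableSet_Iic
  have int_mid : IntegrableOn g (Ioc a b) := hmid.neg.congr_fun eq_mid.symm measurableSet_Ioc
  have int_right : IntegrableOn g (Ioi b) :=
    (hright.mono_set Ioi_subset_Ici_self).congr_fun eq_right.symm measurableSet_Ioi
  have hdisj : Disjoint (Iic a ∪ Ioc a b) (Ioi b) := by
    rw [Iic_union_Ioc_eq_Iic hab]; exact Iic_disjoint_Ioi le_rfl
  have huniv : (Iic a ∪ Ioc a b) ∪ Ioi b = univ := by
    rw [Iic_union_Ioc_eq_Iic hab, Iic_union_Ioi]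
  rw [← setIntegral_univ, ← huniv,
    setIntegral_union hdisj measurableSet_Ioi (int_left.union int_mid) int_right,
    setIntegral_union (Iic_disjoint_Ioc le_rfl) measurableSet_Ioc int_left int_mid,
    setIntegral_congr_fun measurableSet_Iic eq_left, setIntegral_congr_fun measurableSet_Ioc eq_mid,
    setIntegral_congr_fun measurableSet_Ioi eq_right, integral_Ici_eq_integral_Ioi,
    intervalIntegral.integral_of_le hab, integral_neg]
  ring

theorem integrableOn_mul_one_sub_div_of_isCompact {Φ ψ : ℝ → ℝ} {s : Set ℝ} (hs : IsCompact s)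
    (hΦ : Measurable Φ) (hΦ0 : ∀ t, 0 ≤ Φ t) (hΦ1 : ∀ t, Φ t ≤ 1)
    (hψinv : LocallyIntegrable fun t => 1 / ψ t) :
    IntegrableOn (fun t => Φ t * (1 - Φ t) / ψ t) s := by
  simp_rw [div_eq_mul_one_div (Φ _ * _)]
  refine (hψinv.integrableOn_isCompact hs).bdd_mul (c := 1)
    (hΦ.mul (measurable_const.sub hΦ)).aestronglyMeasurable (.of_forall fun t => ?_)
  rw [norm_of_nonneg (mul_nonneg (hΦ0 t) (sub_nonneg.mpr (hΦ1 t)))]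
  nlinarith [hΦ0 t, hΦ1 t]

theorem integrable_centeredStep_div_mul {Φ ψ : ℝ → ℝ} (hΦ : Measurable Φ) (hΦ0 : ∀ t, 0 ≤ Φ t)
    (hΦ1 : ∀ t, Φ t ≤ 1) (hψ : AEMeasurable ψ) (hψ0 : ∀ t, 0 ≤ ψ t) (y : ℝ)
    (hleft : IntegrableOn (fun t => Φ t ^ 2 / ψ t) (Iic y))
    (hright : IntegrableOn (fun t => (1 - Φ t) ^ 2 / ψ t) (Ioi y)) :
    Integrable fun t => centeredStep Φ t y / ψ t * (Φ t * (1 - Φ t)) := by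
  have hmeas : AEStronglyMeasurable (fun t => centeredStep Φ t y / ψ t * (Φ t * (1 - Φ t))) :=
    (((measurable_centeredStep_left hΦ y).aemeasurable.div hψ).mul
      (hΦ.mul (measurable_const.sub hΦ)).aemeasurable).aestronglyMeasurable
  rw [← integrableOn_univ, ← Iic_union_Ioi (a := y)]
  refine IntegrableOn.union ?_ ?_
  · refine hleft.mono' hmeas.restrict
      (ae_restrict_of_forall_mem measurableSet_Iic fun t (ht : t ≤ y) => ?_)
    have hΦψ : 0 ≤ Φ t ^ 2 / ψ t := div_nonneg (sq_nonneg _) (hψ0 t)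
    calc ‖centeredStep Φ t y / ψ t * (Φ t * (1 - Φ t))‖ = Φ t ^ 2 / ψ t * (1 - Φ t) := by
          rw [centeredStep_of_le ht, ← norm_of_nonneg (mul_nonneg hΦψ (sub_nonneg.mpr (hΦ1 t)))]
          ring_nf
      _ ≤ Φ t ^ 2 / ψ t := mul_le_of_le_one_right hΦψ (by linarith [hΦ0 t])
  · refine hright.mono' hmeas.restrict
      (ae_restrict_of_forall_mem measurableSet_Ioi fun t (ht : y < t) => ?_)
    have hΦψ : 0 ≤ (1 - Φ t) ^ 2 / ψ t := div_nonneg (sq_nonneg _) (hψ0 t)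
    calc ‖centeredStep Φ t y / ψ t * (Φ t * (1 - Φ t))‖ = (1 - Φ t) ^ 2 / ψ t * Φ t := by
          rw [centeredStep_of_lt ht, ← norm_of_nonneg (mul_nonneg hΦψ (hΦ0 t)), ← norm_neg]
          ring_nf
      _ ≤ (1 - Φ t) ^ 2 / ψ t := mul_le_of_le_one_right hΦψ (hΦ1 t)

theorem integral_integral_mul_centeredStep_densityCDF_mul {ρ w : ℝ → ℝ} (hρ0 : ∀ x, 0 ≤ ρ x)
    (hρint : Integrable ρ) (hρ1 : ∫ x, ρ x = 1) (hw : AEStronglyMeasurable w)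
    (hwΦ : Integrable fun t => w t * (densityCDF ρ t * (1 - densityCDF ρ t))) :
    ∫ x, (∫ t, w t * centeredStep (densityCDF ρ) t x) * ρ x = 0 := by
  set Φ := densityCDF ρ
  set F : ℝ → ℝ → ℝ := fun t x => w t * (centeredStep Φ t x * ρ x)
  have hFmeas : AEStronglyMeasurable (Function.uncurry F) (volume.prod volume) :=
    hw.comp_fst.mul ((measurable_uncurry_centeredStep
      (monotone_densityCDF hρ0 hρint).measurable).aestronglyMeasurable.mul
        hρint.aestronglyMeasurable.comp_snd)
  have hnorm (t : ℝ) : ∫ x, ‖F t x‖ = 2 * ‖w t * (Φ t * (1 - Φ t))‖ := by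
    have hΦ : 0 ≤ Φ t * (1 - Φ t) := mul_nonneg (densityCDF_nonneg hρ0 t)
      (sub_nonneg.mpr (densityCDF_le_one hρ0 hρint hρ1 t))
    simp only [F, norm_mul, norm_of_nonneg (hρ0 _), norm_of_nonneg hΦ, Real.norm_eq_abs]
    rw [integral_const_mul, integral_abs_centeredStep_densityCDF_mul hρ0 hρint hρ1]
    ring
  have hF : Integrable (Function.uncurry F) (volume.prod volume) := by
    rw [integrable_prod_iff hFmeas]
    refine ⟨.of_forall fun t => (integrable_centeredStep_mul hρint Φ t).const_mul (w t), ?_⟩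
    simpa only [Function.uncurry_apply_pair, hnorm] using hwΦ.norm.const_mul 2
  calc ∫ x, (∫ t, w t * centeredStep Φ t x) * ρ x = ∫ x, ∫ t, F t x := by
        simp only [F, ← mul_assoc, integral_mul_const]
    _ = ∫ t, ∫ x, F t x := (integral_integral_swap hF).symm
    _ = 0 := by
        simp only [F, Φ, integral_const_mul, integral_centeredStep_densityCDF_mul hρint hρ1,
          mul_zero, integral_zero]

theorem stmt7_general (ρ ψ Φ : ℝ → ℝ) (η : ℝ → ℝ → ℝ)
    (hρpos : ∀ x, 0 < ρ x) (hρint : Integrable ρ) (hρ1 : ∫ x, ρ x = 1)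
    (hψpos : ∀ x, 0 < ψ x)
    (hψinvloc : LocallyIntegrable (fun x => 1 / ψ x))
    (hΦ : ∀ x, Φ x = ∫ t in Iic x, ρ t)
    (hweak : ∀ c : ℝ, IntegrableOn (fun t => Φ t ^ 2 / ψ t) (Iic c) ∧
        IntegrableOn (fun t => (1 - Φ t) ^ 2 / ψ t) (Ici c))
    (hη : ∀ x y : ℝ, η x y =
        (∫ t in Iic (min x y), Φ t ^ 2 / ψ t)
        + (∫ t in Ici (max x y), (1 - Φ t) ^ 2 / ψ t)
        - ∫ t in (min x y)..(max x y), Φ t * (1 - Φ t) / ψ t) :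
    ∀ y : ℝ, ∫ x, η x y * ρ x = 0 := by
  intro y
  obtain rfl : Φ = densityCDF ρ := funext hΦ
  have hρ0 (x : ℝ) : 0 ≤ ρ x := (hρpos x).le
  have hΦ0 := densityCDF_nonneg hρ0
  have hΦ1 := densityCDF_le_one hρ0 hρint hρ1
  have hΦm := (monotone_densityCDF hρ0 hρint).measurable
  have hψ : AEMeasurable ψ := by
    simpa [Pi.inv_def] using hψinvloc.aestronglyMeasurable.aemeasurable.inv
  have hη_eq (x : ℝ) :
      η x y = ∫ t, centeredStep (densityCDF ρ) t y / ψ t * centeredStep (densityCDF ρ) t x := by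
    rw [hη, ← integral_centeredStep_mul_centeredStep_div min_le_max (hweak _).1
      ((integrableOn_mul_one_sub_div_of_isCompact isCompact_Icc hΦm hΦ0 hΦ1 hψinvloc).mono_set
        Ioc_subset_Icc_self) (hweak _).2]
    congr 1 with t
    rw [centeredStep_mul_min_max]
    ring
  simp_rw [hη_eq]
  exact integral_integral_mul_centeredStep_densityCDF_mul hρ0 hρint hρ1
    ((measurable_centeredStep_left hΦm y).aemeasurable.div hψ).aestronglyMeasurable
    (integrable_centeredStep_div_mul hΦm hΦ0 hΦ1 hψ (fun t => (hψpos t).le) y (hweak y).1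
      ((hweak y).2.mono_set Ioi_subset_Ici_self))

theorem stmt7 (ρ ψ Φ : ℝ → ℝ) (η : ℝ → ℝ → ℝ)
    (hρpos : ∀ x, 0 < ρ x) (hρint : Integrable ρ) (hρ1 : ∫ x, ρ x = 1)
    (hψpos : ∀ x, 0 < ψ x)
    (hψloc : LocallyIntegrable ψ)
    (hψinvloc : LocallyIntegrable (fun x => 1 / ψ x))
    (hΦ : ∀ x, Φ x = ∫ t in Iic x, ρ t)
    (hweak : ∀ c : ℝ, IntegrableOn (fun t => Φ t ^ 2 / ψ t) (Iic c) ∧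
        IntegrableOn (fun t => (1 - Φ t) ^ 2 / ψ t) (Ici c))
    (hη : ∀ x y : ℝ, η x y =
        (∫ t in Iic (min x y), Φ t ^ 2 / ψ t)
        + (∫ t in Ici (max x y), (1 - Φ t) ^ 2 / ψ t)
        - ∫ t in (min x y)..(max x y), Φ t * (1 - Φ t) / ψ t) :
    ∀ y : ℝ, ∫ x, η x y * ρ x = 0 :=
  stmt7_general ρ ψ Φ η hρpos hρint hρ1 hψpos hψinvloc hΦ hweak hη
end

section
/- With η as above (under the weaker condition), for every y ∈ ℝ, the partial derivative ∂η/∂x(x,y) equals Φ(x)/ψ(x) for x < y and -(1-Φ(x))/ψ(x) for x > y, and ∫_{-∞}^∞ |∂η/∂x(x,y)|² ψ(x) dx = η(y,y). -/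
/-!
Away from the diagonal, `η (·) y` differs from `η y y` by a primitive: for `x < y` it is
`η y y + ∫_y^x Φ/ψ`, because `Φ² + Φ(1-Φ) = Φ`, and for `x > y` it is `η y y - ∫_y^x (1-Φ)/ψ`.
The Lebesgue differentiation theorem then gives the derivative almost everywhere. The middle
integrand is locally integrable because `2Φ(1-Φ) = 1 - Φ² - (1-Φ)²`. Finally the squared
derivative times `ψ` is `Φ²/ψ` left of `y` and `(1-Φ)²/ψ` right of it, whose integrals add up
to `η y y`.
-/

open MeasureTheory Set Filter

noncomputable def greenKernel (ψ Φ : ℝ → ℝ) (x y : ℝ) : ℝ :=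
  (∫ t in Iic (min x y), Φ t ^ 2 / ψ t)
    + (∫ t in Ici (max x y), (1 - Φ t) ^ 2 / ψ t)
    - ∫ t in (min x y)..(max x y), Φ t * (1 - Φ t) / ψ t

section LocallyIntegrable

variable {f : ℝ → ℝ}

lemma locallyIntegrable_of_forall_integrableOn_Iic (hf : ∀ c, IntegrableOn f (Iic c)) :
    LocallyIntegrable f :=
  fun x => ⟨Iic (x + 1), Iic_mem_nhds (lt_add_one x), hf _⟩

lemma locallyIntegrable_of_forall_integrableOn_Ici (hf : ∀ c, IntegrableOn f (Ici c)) :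
    LocallyIntegrable f :=
  fun x => ⟨Ici (x - 1), Ici_mem_nhds (sub_one_lt x), hf _⟩

lemma MeasureTheory.LocallyIntegrable.intervalIntegrable (hf : LocallyIntegrable f) (a b : ℝ) :
    IntervalIntegrable f volume a b :=
  (hf.integrableOn_isCompact isCompact_uIcc).intervalIntegrable

end LocallyIntegrable

namespace greenKernel

variable {ψ Φ : ℝ → ℝ}

lemma locallyIntegrable_mul_one_sub_div (hψ : LocallyIntegrable (fun t => 1 / ψ t))
    (h₁ : LocallyIntegrable (fun t => Φ t ^ 2 / ψ t))
    (h₃ : LocallyIntegrable (fun t => (1 - Φ t) ^ 2 / ψ t)) :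
    LocallyIntegrable (fun t => Φ t * (1 - Φ t) / ψ t) := by
  convert ((hψ.sub h₁).sub h₃).smul (2⁻¹ : ℝ) using 1
  funext t
  simp only [Pi.smul_apply, Pi.sub_apply, smul_eq_mul]
  ring

lemma self_eq (y : ℝ) : greenKernel ψ Φ y y =
    (∫ t in Iic y, Φ t ^ 2 / ψ t) + ∫ t in Ici y, (1 - Φ t) ^ 2 / ψ t := by
  simp [greenKernel]

lemma eq_add_integral_of_le {x y : ℝ} (hxy : x ≤ y)
    (h₁ : IntegrableOn (fun t => Φ t ^ 2 / ψ t) (Iic y))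
    (h₂ : IntervalIntegrable (fun t => Φ t * (1 - Φ t) / ψ t) volume x y) :
    greenKernel ψ Φ x y = greenKernel ψ Φ y y + ∫ t in y..x, Φ t / ψ t := by
  have h₁' := h₁.mono_set (Iic_subset_Iic.2 hxy)
  have hsplit : ∫ t in y..x, Φ t / ψ t
      = (∫ t in y..x, Φ t ^ 2 / ψ t) + ∫ t in y..x, Φ t * (1 - Φ t) / ψ t := by
    rw [← intervalIntegral.integral_add
      ((intervalIntegrable_iff_integrableOn_Icc_of_le hxy).2
        (h₁.mono_set Icc_subset_Iic_self)).symm h₂.symm]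
    congr 1; funext t; ring
  rw [greenKernel, self_eq, min_eq_left hxy, max_eq_right hxy, hsplit,
    ← intervalIntegral.integral_Iic_sub_Iic h₁ h₁', intervalIntegral.integral_symm x y]
  ring

lemma eq_sub_integral_of_ge {x y : ℝ} (hyx : y ≤ x)
    (h₃ : IntegrableOn (fun t => (1 - Φ t) ^ 2 / ψ t) (Ici y))
    (h₂ : IntervalIntegrable (fun t => Φ t * (1 - Φ t) / ψ t) volume y x) :
    greenKernel ψ Φ x y = greenKernel ψ Φ y y - ∫ t in y..x, (1 - Φ t) / ψ t := by
  have h₃' := h₃.mono_set (Ici_subset_Ici.2 hyx)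
  have hsplit : ∫ t in y..x, (1 - Φ t) / ψ t
      = (∫ t in y..x, (1 - Φ t) ^ 2 / ψ t) + ∫ t in y..x, Φ t * (1 - Φ t) / ψ t := by
    rw [← intervalIntegral.integral_add
      ((intervalIntegrable_iff_integrableOn_Icc_of_le hyx).2
        (h₃.mono_set Icc_subset_Ici_self)) h₂]
    congr 1; funext t; ring
  rw [greenKernel, self_eq, min_eq_right hyx, max_eq_left hyx, hsplit,
    ← intervalIntegral.integral_Ici_sub_Ici' h₃ h₃']
  ring

lemma integral_sq_mul_eq_self (hψ : ∀ t, ψ t ≠ 0) (y : ℝ)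
    (h₁ : IntegrableOn (fun t => Φ t ^ 2 / ψ t) (Iic y))
    (h₃ : IntegrableOn (fun t => (1 - Φ t) ^ 2 / ψ t) (Ici y)) :
    ∫ x, (if x < y then Φ x / ψ x else -(1 - Φ x) / ψ x) ^ 2 * ψ x = greenKernel ψ Φ y y := by
  have hsq : ∀ x, (if x < y then Φ x / ψ x else -(1 - Φ x) / ψ x) ^ 2 * ψ x
      = (Iio y).piecewise (fun t => Φ t ^ 2 / ψ t) (fun t => (1 - Φ t) ^ 2 / ψ t) x := by
    intro x
    by_cases hx : x < y
    · simp only [hx, if_true, piecewise, mem_Iio]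
      field_simp [hψ x]
    · simp only [hx, if_false, piecewise, mem_Iio]
      field_simp [hψ x]
  simp_rw [hsq]
  rw [integral_piecewise measurableSet_Iio (h₁.mono_set Iio_subset_Iic_self) (by rwa [compl_Iio]),
    compl_Iio, setIntegral_congr_set Iio_ae_eq_Iic, self_eq]

lemma hasDerivAt_of_lt {x y : ℝ} (hxy : x < y)
    (h₁ : IntegrableOn (fun t => Φ t ^ 2 / ψ t) (Iic y))
    (h₂ : LocallyIntegrable (fun t => Φ t * (1 - Φ t) / ψ t))
    (hprim : HasDerivAt (fun u => ∫ t in y..u, Φ t / ψ t) (Φ x / ψ x) x) :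
    HasDerivAt (fun u => greenKernel ψ Φ u y) (Φ x / ψ x) x := by
  refine (hprim.const_add (greenKernel ψ Φ y y)).congr_of_eventuallyEq ?_
  filter_upwards [Iio_mem_nhds hxy] with u hu
  exact eq_add_integral_of_le (le_of_lt hu) h₁ (h₂.intervalIntegrable u y)

lemma hasDerivAt_of_gt {x y : ℝ} (hxy : y < x)
    (h₃ : IntegrableOn (fun t => (1 - Φ t) ^ 2 / ψ t) (Ici y))
    (h₂ : LocallyIntegrable (fun t => Φ t * (1 - Φ t) / ψ t))
    (hprim : HasDerivAt (fun u => ∫ t in y..u, (1 - Φ t) / ψ t) ((1 - Φ x) / ψ x) x) :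
    HasDerivAt (fun u => greenKernel ψ Φ u y) (-(1 - Φ x) / ψ x) x := by
  rw [neg_div]
  refine (hprim.const_sub (greenKernel ψ Φ y y)).congr_of_eventuallyEq ?_
  filter_upwards [Ioi_mem_nhds hxy] with u hu
  exact eq_sub_integral_of_ge (le_of_lt hu) h₃ (h₂.intervalIntegrable y u)

end greenKernel

theorem stmt8_general (ψ Φ : ℝ → ℝ) (η : ℝ → ℝ → ℝ)
    (hψpos : ∀ x, 0 < ψ x)
    (hψinvloc : LocallyIntegrable (fun x => 1 / ψ x))
    (hweak : ∀ c : ℝ, IntegrableOn (fun t => Φ t ^ 2 / ψ t) (Iic c) ∧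
        IntegrableOn (fun t => (1 - Φ t) ^ 2 / ψ t) (Ici c))
    (hη : ∀ x y : ℝ, η x y =
        (∫ t in Iic (min x y), Φ t ^ 2 / ψ t)
        + (∫ t in Ici (max x y), (1 - Φ t) ^ 2 / ψ t)
        - ∫ t in (min x y)..(max x y), Φ t * (1 - Φ t) / ψ t) :
    ∀ y : ℝ,
      (∀ᵐ x : ℝ, x ≠ y → HasDerivAt (fun x' => η x' y)
          (if x < y then Φ x / ψ x else -(1 - Φ x) / ψ x) x) ∧
      (∫ x, (if x < y then Φ x / ψ x else -(1 - Φ x) / ψ x) ^ 2 * ψ x) = η y y := by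
  obtain rfl : η = greenKernel ψ Φ := funext₂ hη
  have h₁ := locallyIntegrable_of_forall_integrableOn_Iic fun c => (hweak c).1
  have h₃ := locallyIntegrable_of_forall_integrableOn_Ici fun c => (hweak c).2
  have h₂ := greenKernel.locallyIntegrable_mul_one_sub_div hψinvloc h₁ h₃
  have hleft : LocallyIntegrable (fun t => Φ t / ψ t) :=
    (h₁.add h₂).congr (.of_forall fun t => by simp only [Pi.add_apply]; ring)
  have hright : LocallyIntegrable (fun t => (1 - Φ t) / ψ t) :=
    (h₃.add h₂).congr (.of_forall fun t => by simp only [Pi.add_apply]; ring)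
  intro y
  refine ⟨?_, greenKernel.integral_sq_mul_eq_self (fun t => (hψpos t).ne') y
    (hweak y).1 (hweak y).2⟩
  filter_upwards [LocallyIntegrable.ae_hasDerivAt_integral hleft,
    LocallyIntegrable.ae_hasDerivAt_integral hright]
    with x hprimleft hprimright hxy
  rcases hxy.lt_or_gt with hlt | hgt
  · rw [if_pos hlt]
    exact greenKernel.hasDerivAt_of_lt hlt (hweak y).1 h₂ (hprimleft y)
  · rw [if_neg hgt.not_gt]
    exact greenKernel.hasDerivAt_of_gt hgt (hweak y).2 h₂ (hprimright y)

theorem stmt8 (ρ ψ Φ : ℝ → ℝ) (η : ℝ → ℝ → ℝ)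
    (hρpos : ∀ x, 0 < ρ x) (hρint : Integrable ρ) (hρ1 : ∫ x, ρ x = 1)
    (hψpos : ∀ x, 0 < ψ x)
    (hψloc : LocallyIntegrable ψ)
    (hψinvloc : LocallyIntegrable (fun x => 1 / ψ x))
    (hΦ : ∀ x, Φ x = ∫ t in Iic x, ρ t)
    (hweak : ∀ c : ℝ, IntegrableOn (fun t => Φ t ^ 2 / ψ t) (Iic c) ∧
        IntegrableOn (fun t => (1 - Φ t) ^ 2 / ψ t) (Ici c))
    (hη : ∀ x y : ℝ, η x y =
        (∫ t in Iic (min x y), Φ t ^ 2 / ψ t)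
        + (∫ t in Ici (max x y), (1 - Φ t) ^ 2 / ψ t)
        - ∫ t in (min x y)..(max x y), Φ t * (1 - Φ t) / ψ t) :
    ∀ y : ℝ,
      (∀ᵐ x : ℝ, x ≠ y → HasDerivAt (fun x' => η x' y)
          (if x < y then Φ x / ψ x else -(1 - Φ x) / ψ x) x) ∧
      (∫ x, (if x < y then Φ x / ψ x else -(1 - Φ x) / ψ x) ^ 2 * ψ x) = η y y :=
  stmt8_general ψ Φ η hψpos hψinvloc hweak hη
end

section
/- Under the weaker condition, for all x, y ∈ ℝ: η(x,y) ≤ η(max(x,y), max(x,y)) and η(x,y) ≤ η(min(x,y), min(x,y)), and η(y,y) = ∫_{-∞}^y Φ(t)²/ψ(t) dt + ∫_y^∞ (1-Φ(t))²/ψ(t) dt ≥ 0. -/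
/-!
Write `m = min x y`, `M = max x y`. Splitting `∫_{-∞}^M Φ²/ψ` at `m` gives
`η(M, M) - η(x, y) = ∫_m^M Φ²/ψ + ∫_m^M Φ(1-Φ)/ψ`, and symmetrically
`η(m, m) - η(x, y) = ∫_m^M (1-Φ)²/ψ + ∫_m^M Φ(1-Φ)/ψ`. All three integrands are
nonnegative because `0 ≤ Φ ≤ 1` and `ψ > 0`; the cross term needs no integrability, since
its interval integral is nonnegative even when it is the junk value `0`.
-/

open MeasureTheory Real Set

theorem setIntegral_mem_Icc_of_integral_eq_one {α : Type*} [MeasurableSpace α] {μ : Measure α}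
    {ρ : α → ℝ} (hρ : 0 ≤ ρ) (hρint : Integrable ρ μ) (hρ1 : ∫ x, ρ x ∂μ = 1) (s : Set α) :
    ∫ x in s, ρ x ∂μ ∈ Icc 0 1 :=
  ⟨integral_nonneg hρ, hρ1 ▸ setIntegral_le_integral hρint (.of_forall hρ)⟩

noncomputable def tailKernel (f g h : ℝ → ℝ) (x y : ℝ) : ℝ :=
  (∫ t in Iic (min x y), f t) + (∫ t in Ici (max x y), g t) - ∫ t in (min x y)..(max x y), h t

section tailKernel

variable {f g h : ℝ → ℝ}

theorem tailKernel_self (y : ℝ) :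
    tailKernel f g h y y = (∫ t in Iic y, f t) + ∫ t in Ici y, g t := by
  simp [tailKernel]

theorem tailKernel_self_nonneg (hf : 0 ≤ f) (hg : 0 ≤ g) (y : ℝ) : 0 ≤ tailKernel f g h y y := by
  rw [tailKernel_self]
  exact add_nonneg (integral_nonneg hf) (integral_nonneg hg)

theorem tailKernel_le_self_max (hf : 0 ≤ f) (hh : 0 ≤ h) (hfi : ∀ c, IntegrableOn f (Iic c))
    (x y : ℝ) : tailKernel f g h x y ≤ tailKernel f g h (max x y) (max x y) := by
  have hmM : min x y ≤ max x y := min_le_max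
  have hsplit := intervalIntegral.integral_Iic_sub_Iic (hfi (min x y)) (hfi (max x y))
  have hf_mM : 0 ≤ ∫ t in (min x y)..(max x y), f t :=
    intervalIntegral.integral_nonneg hmM fun t _ => hf t
  have hh_mM : 0 ≤ ∫ t in (min x y)..(max x y), h t :=
    intervalIntegral.integral_nonneg hmM fun t _ => hh t
  rw [tailKernel_self, tailKernel]
  linarith

theorem tailKernel_le_self_min (hg : 0 ≤ g) (hh : 0 ≤ h) (hgi : ∀ c, IntegrableOn g (Ici c))
    (x y : ℝ) : tailKernel f g h x y ≤ tailKernel f g h (min x y) (min x y) := by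
  have hmM : min x y ≤ max x y := min_le_max
  have hsplit := intervalIntegral.integral_Ici_sub_Ici' (hgi (min x y)) (hgi (max x y))
  have hg_mM : 0 ≤ ∫ t in (min x y)..(max x y), g t :=
    intervalIntegral.integral_nonneg hmM fun t _ => hg t
  have hh_mM : 0 ≤ ∫ t in (min x y)..(max x y), h t :=
    intervalIntegral.integral_nonneg hmM fun t _ => hh t
  rw [tailKernel_self, tailKernel]
  linarith

end tailKernel

theorem stmt9_general (ρ ψ Φ : ℝ → ℝ) (η : ℝ → ℝ → ℝ)
    (hρpos : ∀ x, 0 < ρ x) (hρint : Integrable ρ) (hρ1 : ∫ x, ρ x = 1)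
    (hψpos : ∀ x, 0 < ψ x)
    (hΦ : ∀ x, Φ x = ∫ t in Iic x, ρ t)
    (hweak : ∀ c : ℝ, IntegrableOn (fun t => Φ t ^ 2 / ψ t) (Iic c) ∧
        IntegrableOn (fun t => (1 - Φ t) ^ 2 / ψ t) (Ici c))
    (hη : ∀ x y : ℝ, η x y =
        (∫ t in Iic (min x y), Φ t ^ 2 / ψ t)
        + (∫ t in Ici (max x y), (1 - Φ t) ^ 2 / ψ t)
        - ∫ t in (min x y)..(max x y), Φ t * (1 - Φ t) / ψ t) :
    ∀ x y : ℝ,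
      η x y ≤ η (max x y) (max x y) ∧
      η x y ≤ η (min x y) (min x y) ∧
      η y y = (∫ t in Iic y, Φ t ^ 2 / ψ t) + (∫ t in Ici y, (1 - Φ t) ^ 2 / ψ t) ∧
      0 ≤ η y y := by
  have hΦ01 (t : ℝ) : Φ t ∈ Icc 0 1 :=
    hΦ t ▸ setIntegral_mem_Icc_of_integral_eq_one (fun s => (hρpos s).le) hρint hρ1 _
  have hf : 0 ≤ fun t => Φ t ^ 2 / ψ t := fun t => div_nonneg (sq_nonneg _) (hψpos t).le
  have hg : 0 ≤ fun t => (1 - Φ t) ^ 2 / ψ t := fun t => div_nonneg (sq_nonneg _) (hψpos t).le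
  have hh : 0 ≤ fun t => Φ t * (1 - Φ t) / ψ t := fun t =>
    div_nonneg (mul_nonneg (hΦ01 t).1 (sub_nonneg.2 (hΦ01 t).2)) (hψpos t).le
  obtain rfl : η = tailKernel (fun t => Φ t ^ 2 / ψ t) (fun t => (1 - Φ t) ^ 2 / ψ t)
      (fun t => Φ t * (1 - Φ t) / ψ t) := funext fun x => funext (hη x)
  intro x y
  exact ⟨tailKernel_le_self_max hf hh (fun c => (hweak c).1) x y,
    tailKernel_le_self_min hg hh (fun c => (hweak c).2) x y,
    tailKernel_self y, tailKernel_self_nonneg hf hg y⟩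

theorem stmt9 (ρ ψ Φ : ℝ → ℝ) (η : ℝ → ℝ → ℝ)
    (hρpos : ∀ x, 0 < ρ x) (hρint : Integrable ρ) (hρ1 : ∫ x, ρ x = 1)
    (hψpos : ∀ x, 0 < ψ x)
    (hψloc : LocallyIntegrable ψ)
    (hψinvloc : LocallyIntegrable (fun x => 1 / ψ x))
    (hΦ : ∀ x, Φ x = ∫ t in Iic x, ρ t)
    (hweak : ∀ c : ℝ, IntegrableOn (fun t => Φ t ^ 2 / ψ t) (Iic c) ∧
        IntegrableOn (fun t => (1 - Φ t) ^ 2 / ψ t) (Ici c))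
    (hη : ∀ x y : ℝ, η x y =
        (∫ t in Iic (min x y), Φ t ^ 2 / ψ t)
        + (∫ t in Ici (max x y), (1 - Φ t) ^ 2 / ψ t)
        - ∫ t in (min x y)..(max x y), Φ t * (1 - Φ t) / ψ t) :
    ∀ x y : ℝ,
      η x y ≤ η (max x y) (max x y) ∧
      η x y ≤ η (min x y) (min x y) ∧
      η y y = (∫ t in Iic y, Φ t ^ 2 / ψ t) + (∫ t in Ici y, (1 - Φ t) ^ 2 / ψ t) ∧
      0 ≤ η y y :=
  stmt9_general ρ ψ Φ η hρpos hρint hρ1 hψpos hΦ hweak hη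
end

section
/- Under the stronger condition ∫_{-∞}^c Φ/ψ < ∞ and ∫_c^∞ (1-Φ)/ψ < ∞ for all finite c, the kernel diagonal integrates to the constant C(ρ,ψ): ∫_{-∞}^∞ η(y,y) ρ(y) dy = ∫_{-∞}^∞ Φ(t)(1-Φ(t))/ψ(t) dt. -/
/-!
All integrands are nonnegative, so both sides may be computed as lower Lebesgue integrals, where
Tonelli's theorem swaps the order of integration without any integrability assumption:
`∫ ρ(y) ∫_{t ≤ y} g(t) dt dy = ∫ g(t) (1 - Φ(t)) dt` and
`∫ ρ(y) ∫_{t ≥ y} h(t) dt dy = ∫ h(t) Φ(t) dt`.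
With `g = Φ² / ψ` and `h = (1 - Φ)² / ψ` the integrand becomes
`Φ² (1 - Φ) / ψ + (1 - Φ)² Φ / ψ = Φ (1 - Φ) / ψ`.
-/

open MeasureTheory Set Filter
open scoped ENNReal

section Tonelli

variable {α β : Type*} [MeasurableSpace α] [MeasurableSpace β]
  {μ : Measure α} {ν : Measure β} [SFinite μ] [SFinite ν]

theorem lintegral_setLIntegral_mul_swap {r : α → β → Prop}
    (hr : MeasurableSet {p : α × β | r p.1 p.2})
    {G : α → ℝ≥0∞} {R : β → ℝ≥0∞} (hG : AEMeasurable G μ) (hR : AEMeasurable R ν) :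
    ∫⁻ y, (∫⁻ t in {t | r t y}, G t ∂μ) * R y ∂ν
      = ∫⁻ t, G t * ∫⁻ y in {y | r t y}, R y ∂ν ∂μ := by
  set F : α × β → ℝ≥0∞ := {p | r p.1 p.2}.indicator fun p => G p.1 * R p.2
  have hF : AEMeasurable F (μ.prod ν) := (hG.comp_fst.mul hR.comp_snd).indicator hr
  have hleft y : (∫⁻ t in {t | r t y}, G t ∂μ) * R y = ∫⁻ t, F (t, y) ∂μ := by
    have hy : MeasurableSet {t | r t y} := hr.preimage measurable_prodMk_right
    rw [← lintegral_mul_const'' _ hG.restrict, ← lintegral_indicator hy]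
    rfl
  have hright t : G t * ∫⁻ y in {y | r t y}, R y ∂ν = ∫⁻ y, F (t, y) ∂ν := by
    have ht : MeasurableSet {y | r t y} := hr.preimage measurable_prodMk_left
    rw [← lintegral_const_mul'' _ hR.restrict, ← lintegral_indicator ht]
    rfl
  simp_rw [hleft, hright]
  exact (lintegral_lintegral_swap (f := fun t y => F (t, y)) hF).symm

end Tonelli

theorem lintegral_setLIntegral_Iic_add_Ici_mul {G H R : ℝ → ℝ≥0∞}
    (hG : AEMeasurable G) (hH : AEMeasurable H) (hR : AEMeasurable R) :
    ∫⁻ y, ((∫⁻ t in Iic y, G t) + ∫⁻ t in Ici y, H t) * R y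
      = ∫⁻ t, G t * (∫⁻ y in Ici t, R y) + H t * ∫⁻ y in Iic t, R y := by
  have hGR : AEMeasurable fun y => (∫⁻ t in Iic y, G t) * R y :=
    (Monotone.measurable fun _ _ hab =>
      lintegral_mono_set (Iic_subset_Iic.mpr hab)).aemeasurable.mul hR
  have hGR' : AEMeasurable fun t => G t * ∫⁻ y in Ici t, R y :=
    hG.mul (Antitone.measurable fun _ _ hab =>
      lintegral_mono_set (Ici_subset_Ici.mpr hab)).aemeasurable
  simp_rw [add_mul]
  rw [lintegral_add_left' hGR, lintegral_add_left' hGR']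
  congr 1
  · exact lintegral_setLIntegral_mul_swap (measurableSet_le measurable_fst measurable_snd) hG hR
  · exact lintegral_setLIntegral_mul_swap (r := fun t y => y ≤ t)
      (measurableSet_le measurable_snd measurable_fst) hH hR

theorem monotone_setIntegral_Iic_s10 {f : ℝ → ℝ} (hf0 : ∀ t, 0 ≤ f t)
    (hf : ∀ y, IntegrableOn f (Iic y)) : Monotone fun y => ∫ t in Iic y, f t :=
  fun _ b hab =>
    setIntegral_mono_set (hf b) (ae_of_all _ hf0) (Iic_subset_Iic.mpr hab).eventuallyLE

theorem antitone_setIntegral_Ici {f : ℝ → ℝ} (hf0 : ∀ t, 0 ≤ f t)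
    (hf : ∀ y, IntegrableOn f (Ici y)) : Antitone fun y => ∫ t in Ici y, f t :=
  fun a _ hab =>
    setIntegral_mono_set (hf a) (ae_of_all _ hf0) (Ici_subset_Ici.mpr hab).eventuallyLE

theorem aestronglyMeasurable_of_forall_integrableOn_Iic {E : Type*} [NormedAddCommGroup E]
    {f : ℝ → E} (hf : ∀ y, IntegrableOn f (Iic y)) : AEStronglyMeasurable f :=
  (aecover_Iic tendsto_id).aestronglyMeasurable fun y => (hf y).aestronglyMeasurable

theorem aestronglyMeasurable_of_forall_integrableOn_Ici {E : Type*} [NormedAddCommGroup E]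
    {f : ℝ → E} (hf : ∀ y, IntegrableOn f (Ici y)) : AEStronglyMeasurable f :=
  (aecover_Ici (l := atBot) tendsto_id).aestronglyMeasurable fun y => (hf y).aestronglyMeasurable

theorem integral_setIntegral_Iic_add_Ici_mul {g h ρ : ℝ → ℝ}
    (hg0 : ∀ t, 0 ≤ g t) (hh0 : ∀ t, 0 ≤ h t) (hρ0 : ∀ y, 0 ≤ ρ y)
    (hg : ∀ y, IntegrableOn g (Iic y)) (hh : ∀ y, IntegrableOn h (Ici y)) (hρ : Integrable ρ) :
    ∫ y, ((∫ t in Iic y, g t) + ∫ t in Ici y, h t) * ρ y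
      = ∫ t, g t * (∫ y in Ici t, ρ y) + h t * ∫ y in Iic t, ρ y := by
  have hgm := aestronglyMeasurable_of_forall_integrableOn_Iic hg
  have hhm := aestronglyMeasurable_of_forall_integrableOn_Ici hh
  have hA := monotone_setIntegral_Iic_s10 hg0 hg
  have hB := antitone_setIntegral_Ici hh0 hh
  have hρIic := monotone_setIntegral_Iic_s10 hρ0 fun _ => hρ.integrableOn
  have hρIci := antitone_setIntegral_Ici hρ0 fun _ => hρ.integrableOn
  have hA0 y : 0 ≤ ∫ t in Iic y, g t := setIntegral_nonneg measurableSet_Iic fun t _ => hg0 t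
  have hB0 y : 0 ≤ ∫ t in Ici y, h t := setIntegral_nonneg measurableSet_Ici fun t _ => hh0 t
  have hρIic0 y : 0 ≤ ∫ t in Iic y, ρ t := setIntegral_nonneg measurableSet_Iic fun t _ => hρ0 t
  have hρIci0 y : 0 ≤ ∫ t in Ici y, ρ t := setIntegral_nonneg measurableSet_Ici fun t _ => hρ0 t
  rw [integral_eq_lintegral_of_nonneg_ae
      (ae_of_all _ fun y => mul_nonneg (add_nonneg (hA0 y) (hB0 y)) (hρ0 y))
      ((hA.measurable.add hB.measurable).aestronglyMeasurable.mul hρ.aestronglyMeasurable),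
    integral_eq_lintegral_of_nonneg_ae
      (ae_of_all _ fun t =>
        add_nonneg (mul_nonneg (hg0 t) (hρIci0 t)) (mul_nonneg (hh0 t) (hρIic0 t)))
      ((hgm.mul hρIci.measurable.aestronglyMeasurable).add
        (hhm.mul hρIic.measurable.aestronglyMeasurable))]
  congr 1
  have hofReal {f : ℝ → ℝ} {s : Set ℝ} (hf0 : ∀ t, 0 ≤ f t) (hf : IntegrableOn f s volume) :
      ENNReal.ofReal (∫ t in s, f t) = ∫⁻ t in s, ENNReal.ofReal (f t) :=
    ofReal_integral_eq_lintegral_ofReal hf (ae_of_all _ hf0)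
  calc ∫⁻ y, ENNReal.ofReal (((∫ t in Iic y, g t) + ∫ t in Ici y, h t) * ρ y)
      = ∫⁻ y, ((∫⁻ t in Iic y, ENNReal.ofReal (g t)) + ∫⁻ t in Ici y, ENNReal.ofReal (h t))
          * ENNReal.ofReal (ρ y) := by
        refine lintegral_congr fun y => ?_
        rw [ENNReal.ofReal_mul (add_nonneg (hA0 y) (hB0 y)),
          ENNReal.ofReal_add (hA0 y) (hB0 y), hofReal hg0 (hg y), hofReal hh0 (hh y)]
    _ = ∫⁻ t, ENNReal.ofReal (g t) * (∫⁻ y in Ici t, ENNReal.ofReal (ρ y))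
          + ENNReal.ofReal (h t) * ∫⁻ y in Iic t, ENNReal.ofReal (ρ y) :=
        lintegral_setLIntegral_Iic_add_Ici_mul hgm.aemeasurable.ennreal_ofReal
          hhm.aemeasurable.ennreal_ofReal hρ.aemeasurable.ennreal_ofReal
    _ = ∫⁻ t, ENNReal.ofReal (g t * (∫ y in Ici t, ρ y) + h t * ∫ y in Iic t, ρ y) := by
        refine lintegral_congr fun t => ?_
        rw [ENNReal.ofReal_add (mul_nonneg (hg0 t) (hρIci0 t)) (mul_nonneg (hh0 t) (hρIic0 t)),
          ENNReal.ofReal_mul (hg0 t), ENNReal.ofReal_mul (hh0 t),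
          hofReal hρ0 hρ.integrableOn, hofReal hρ0 hρ.integrableOn]

theorem stmt10_general (ρ ψ Φ : ℝ → ℝ)
    (hρpos : ∀ x, 0 < ρ x) (hρ1 : ∫ x, ρ x = 1)
    (hψpos : ∀ x, 0 < ψ x)
    (hΦ : ∀ x, Φ x = ∫ t in Iic x, ρ t)
    (hstrong : ∀ c : ℝ, IntegrableOn (fun t => Φ t / ψ t) (Iic c) ∧
        IntegrableOn (fun t => (1 - Φ t) / ψ t) (Ici c)) :
    ∫ y, ((∫ t in Iic y, Φ t ^ 2 / ψ t) + (∫ t in Ici y, (1 - Φ t) ^ 2 / ψ t)) * ρ y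
      = ∫ t, Φ t * (1 - Φ t) / ψ t := by
  have hρ : Integrable ρ := Integrable.of_integral_ne_zero (hρ1 ▸ one_ne_zero)
  have hρ0 x : 0 ≤ ρ x := (hρpos x).le
  have hΦ0 x : 0 ≤ Φ x := hΦ x ▸ setIntegral_nonneg measurableSet_Iic fun t _ => hρ0 t
  have hΦ1 x : Φ x ≤ 1 := hΦ x ▸ hρ1 ▸ setIntegral_le_integral hρ (ae_of_all _ hρ0)
  have hΦm : Measurable Φ := by
    rw [funext hΦ]; exact (monotone_setIntegral_Iic_s10 hρ0 fun _ => hρ.integrableOn).measurable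
  have hρIci x : ∫ t in Ici x, ρ t = 1 - Φ x := by
    rw [hΦ, integral_Iic_eq_integral_Iio, ← hρ1,
      ← intervalIntegral.integral_Iio_add_Ici hρ.integrableOn hρ.integrableOn,
      add_sub_cancel_left]
  have hg y : IntegrableOn (fun t => Φ t ^ 2 / ψ t) (Iic y) := by
    refine ((hstrong y).1.bdd_mul (c := 1) hΦm.aestronglyMeasurable
      (ae_of_all _ fun t => ?_)).congr (ae_of_all _ fun t => by ring)
    exact abs_le.mpr ⟨by linarith [hΦ0 t], hΦ1 t⟩
  have hh y : IntegrableOn (fun t => (1 - Φ t) ^ 2 / ψ t) (Ici y) := by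
    refine ((hstrong y).2.bdd_mul (c := 1) (hΦm.const_sub 1).aestronglyMeasurable
      (ae_of_all _ fun t => ?_)).congr (ae_of_all _ fun t => by ring)
    exact abs_le.mpr ⟨by linarith [hΦ1 t], by linarith [hΦ0 t]⟩
  calc _ = ∫ t, Φ t ^ 2 / ψ t * (∫ y in Ici t, ρ y)
          + (1 - Φ t) ^ 2 / ψ t * ∫ y in Iic t, ρ y :=
        integral_setIntegral_Iic_add_Ici_mul (fun t => div_nonneg (sq_nonneg _) (hψpos t).le)
          (fun t => div_nonneg (sq_nonneg _) (hψpos t).le) hρ0 hg hh hρ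
    _ = _ := by
        refine integral_congr_ae (ae_of_all _ fun t => ?_)
        simp only [hρIci, ← hΦ]
        ring

theorem stmt10 (ρ ψ Φ : ℝ → ℝ)
    (hρpos : ∀ x, 0 < ρ x) (hρint : Integrable ρ) (hρ1 : ∫ x, ρ x = 1)
    (hψpos : ∀ x, 0 < ψ x)
    (hψloc : LocallyIntegrable ψ)
    (hψinvloc : LocallyIntegrable (fun x => 1 / ψ x))
    (hΦ : ∀ x, Φ x = ∫ t in Iic x, ρ t)
    (hstrong : ∀ c : ℝ, IntegrableOn (fun t => Φ t / ψ t) (Iic c) ∧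
        IntegrableOn (fun t => (1 - Φ t) / ψ t) (Ici c)) :
    ∫ y, ((∫ t in Iic y, Φ t ^ 2 / ψ t) + (∫ t in Ici y, (1 - Φ t) ^ 2 / ψ t)) * ρ y
      = ∫ t, Φ t * (1 - Φ t) / ψ t :=
  stmt10_general ρ ψ Φ hρpos hρ1 hψpos hΦ hstrong
end

section
/- Under the stronger condition, η admits the alternative representation η(x,y) = ∫_{-∞}^{min(x,y)} Φ(t)/ψ(t) dt + ∫_{max(x,y)}^∞ (1-Φ(t))/ψ(t) dt - C(ρ,ψ), where C(ρ,ψ) = ∫_{-∞}^∞ Φ(t)(1-Φ(t))/ψ(t) dt. -/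
/-!
Since `Φ² = Φ - Φ(1-Φ)` and `(1-Φ)² = (1-Φ) - Φ(1-Φ)`, the two tail integrals defining `η`
each split off `Φ(1-Φ)/ψ` over their tail; together with the middle integral this makes up
`-∫ Φ(1-Φ)/ψ` over the whole line. That integral converges because `Φ` is bounded:
`Φ(1-Φ)/ψ` is `(1-Φ) · Φ/ψ` on left half-lines and `Φ · (1-Φ)/ψ` on right half-lines.
-/

open MeasureTheory Real Set

section Primitive

variable {ρ : ℝ → ℝ}

theorem MeasureTheory.Integrable.continuous_integral_Iic (hρ : Integrable ρ) :
    Continuous fun x => ∫ t in Iic x, ρ t :=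
  continuous_iff_continuousAt.2 fun x =>
    hρ.integrableOn.continuousOn_Iic_primitive_Iic.continuousAt (Iic_mem_nhds (lt_add_one x))

theorem norm_integral_Iic_le_integral_norm (hρ : Integrable ρ) (x : ℝ) :
    ‖∫ t in Iic x, ρ t‖ ≤ ∫ t, ‖ρ t‖ :=
  (norm_integral_le_integral_norm _).trans
    (setIntegral_le_integral hρ.norm (ae_of_all _ fun _ => norm_nonneg _))

end Primitive

theorem integral_Iic_add_intervalIntegral_add_integral_Ici {g : ℝ → ℝ} (hg : Integrable g)
    (a b : ℝ) :
    (∫ t in Iic a, g t) + (∫ t in a..b, g t) + ∫ t in Ici b, g t = ∫ t, g t := by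
  rw [← intervalIntegral.integral_Iic_sub_Iic hg.integrableOn hg.integrableOn,
    integral_Ici_eq_integral_Ioi,
    ← intervalIntegral.integral_Iic_add_Ioi (b := b) hg.integrableOn hg.integrableOn]
  ring

theorem integrable_of_integrableOn_Iic_of_integrableOn_Ici {g : ℝ → ℝ} {c : ℝ}
    (hl : IntegrableOn g (Iic c)) (hr : IntegrableOn g (Ici c)) : Integrable g := by
  rw [← integrableOn_univ, ← Iic_union_Ici (a := c)]
  exact hl.union hr

section Bounded

variable {Φ ψ : ℝ → ℝ} {C : ℝ}

theorem integrable_mul_one_sub_div (hΦ : Continuous Φ) (hΦC : ∀ t, ‖Φ t‖ ≤ C) {c : ℝ}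
    (hl : IntegrableOn (fun t => Φ t / ψ t) (Iic c))
    (hr : IntegrableOn (fun t => (1 - Φ t) / ψ t) (Ici c)) :
    Integrable fun t => Φ t * (1 - Φ t) / ψ t := by
  have hΦC' : ∀ t, ‖1 - Φ t‖ ≤ 1 + C := fun t =>
    (norm_sub_le _ _).trans (by rw [norm_one]; linarith [hΦC t])
  refine integrable_of_integrableOn_Iic_of_integrableOn_Ici (c := c) ?_ ?_
  · refine (hl.bdd_mul (f := fun t => 1 - Φ t) (continuous_const.sub hΦ).aestronglyMeasurable
      (ae_of_all _ hΦC')).congr (ae_of_all _ fun t => ?_)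
    ring
  · refine (hr.bdd_mul hΦ.aestronglyMeasurable (ae_of_all _ hΦC)).congr (ae_of_all _ fun t => ?_)
    ring

end Bounded

theorem stmt11_general (ρ ψ Φ : ℝ → ℝ) (η : ℝ → ℝ → ℝ)
    (hρint : Integrable ρ)
    (hΦ : ∀ x, Φ x = ∫ t in Iic x, ρ t)
    (hstrong : ∀ c : ℝ, IntegrableOn (fun t => Φ t / ψ t) (Iic c) ∧
        IntegrableOn (fun t => (1 - Φ t) / ψ t) (Ici c))
    (hη : ∀ x y : ℝ, η x y =
        (∫ t in Iic (min x y), Φ t ^ 2 / ψ t)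
        + (∫ t in Ici (max x y), (1 - Φ t) ^ 2 / ψ t)
        - ∫ t in (min x y)..(max x y), Φ t * (1 - Φ t) / ψ t) :
    ∀ x y : ℝ, η x y =
      (∫ t in Iic (min x y), Φ t / ψ t)
      + (∫ t in Ici (max x y), (1 - Φ t) / ψ t)
      - ∫ t, Φ t * (1 - Φ t) / ψ t := by
  intro x y
  have hΦc : Continuous Φ := funext hΦ ▸ hρint.continuous_integral_Iic
  have hΦC : ∀ t, ‖Φ t‖ ≤ ∫ t, ‖ρ t‖ := fun t => hΦ t ▸ norm_integral_Iic_le_integral_norm hρint t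
  have hg := integrable_mul_one_sub_div hΦc hΦC (hstrong 0).1 (hstrong 0).2
  obtain ⟨hl, -⟩ := hstrong (min x y)
  obtain ⟨-, hr⟩ := hstrong (max x y)
  have hsq_left (u v : ℝ) : u ^ 2 / v = u / v - u * (1 - u) / v := by ring
  have hsq_right (u v : ℝ) : (1 - u) ^ 2 / v = (1 - u) / v - u * (1 - u) / v := by ring
  rw [hη, ← integral_Iic_add_intervalIntegral_add_integral_Ici hg (min x y) (max x y)]
  -- `hsq_left` also matches `(1 - u) ^ 2 / v`, so `hsq_right` must fire first
  simp only [hsq_right]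
  simp only [hsq_left]
  rw [integral_sub hl hg.integrableOn, integral_sub hr hg.integrableOn]
  ring

theorem stmt11 (ρ ψ Φ : ℝ → ℝ) (η : ℝ → ℝ → ℝ)
    (hρpos : ∀ x, 0 < ρ x) (hρint : Integrable ρ) (hρ1 : ∫ x, ρ x = 1)
    (hψpos : ∀ x, 0 < ψ x)
    (hψloc : LocallyIntegrable ψ)
    (hψinvloc : LocallyIntegrable (fun x => 1 / ψ x))
    (hΦ : ∀ x, Φ x = ∫ t in Iic x, ρ t)
    (hstrong : ∀ c : ℝ, IntegrableOn (fun t => Φ t / ψ t) (Iic c) ∧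
        IntegrableOn (fun t => (1 - Φ t) / ψ t) (Ici c))
    (hη : ∀ x y : ℝ, η x y =
        (∫ t in Iic (min x y), Φ t ^ 2 / ψ t)
        + (∫ t in Ici (max x y), (1 - Φ t) ^ 2 / ψ t)
        - ∫ t in (min x y)..(max x y), Φ t * (1 - Φ t) / ψ t) :
    ∀ x y : ℝ, η x y =
      (∫ t in Iic (min x y), Φ t / ψ t)
      + (∫ t in Ici (max x y), (1 - Φ t) / ψ t)
      - ∫ t, Φ t * (1 - Φ t) / ψ t :=
  stmt11_general ρ ψ Φ η hρint hΦ hstrong hη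
end

section
/- Suppose the stronger condition holds for (ρ,ψ) with C(ρ,ψ) = ∫ Φ(1-Φ)/ψ < ∞. Then for every f in the ANOVA space 𝒲 (i.e., f ∈ L¹_ρ with f' ∈ L²_ψ and ‖f‖_𝒲 < ∞), ∫_{-∞}^∞ |f(x)|² ρ(x) dx ≤ (1 + γ C(ρ,ψ)) ‖f‖²_𝒲, where ‖f‖²_𝒲 = |∫ f ρ|² + (1/γ)∫|f'|²ψ. -/
open MeasureTheory Real Set

/-!
With the kernel `K(x, t) = Φ t - 𝟙{x < t}`, averaging `f x - f y = ∫_y^x f'` against `ρ y` and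
applying Fubini gives `f x - ∫ f ρ = ∫ f' t K(x, t) dt`. Cauchy–Schwarz with weight `ψ` then bounds
`(f x - ∫ f ρ)²` by `(∫ f'² ψ) ∫ K(x, t)² / ψ t dt`, and integrating in `x` against `ρ` (Tonelli,
with `∫ ρ x K(x, t)² dx = Φ t (1 - Φ t)`) bounds the variance `∫ (f - ∫ f ρ)² ρ` by
`C(ρ, ψ) ∫ f'² ψ`. The half-line conditions on `Φ / ψ` and `(1 - Φ) / ψ` say exactly that
`|K(x, ·)| / ψ` is integrable for every `x`.
-/

section WeightedCauchySchwarz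

variable {α : Type*} [MeasurableSpace α] {μ : Measure α} {g h w : α → ℝ}

lemma two_mul_abs_mul_le_sq_mul_add_sq_div {a b c : ℝ} (hc : 0 < c) :
    2 * |a * b| ≤ a ^ 2 * c + b ^ 2 / c := by
  have hdiff : a ^ 2 * c + b ^ 2 / c - 2 * |a * b| = (|a| * c - |b|) ^ 2 / c := by
    rw [abs_mul]
    field_simp
    rw [← sq_abs a, ← sq_abs b]
    ring
  nlinarith [div_nonneg (sq_nonneg (|a| * c - |b|)) hc.le]

lemma integrable_mul_of_sq_mul_of_sq_div (hg : AEStronglyMeasurable g μ)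
    (hh : AEStronglyMeasurable h μ) (hw : ∀ x, 0 < w x)
    (hgw : Integrable (fun x => g x ^ 2 * w x) μ) (hhw : Integrable (fun x => h x ^ 2 / w x) μ) :
    Integrable (fun x => g x * h x) μ := by
  refine ((hgw.add hhw).div_const 2).mono' (hg.mul hh) (.of_forall fun x => ?_)
  rw [Real.norm_eq_abs, le_div_iff₀ two_pos, mul_comm]
  exact two_mul_abs_mul_le_sq_mul_add_sq_div (hw x)

lemma sq_integral_mul_le_of_pos_weight (hw : ∀ x, 0 < w x)
    (hgw : Integrable (fun x => g x ^ 2 * w x) μ) (hhw : Integrable (fun x => h x ^ 2 / w x) μ)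
    (hgh : Integrable (fun x => g x * h x) μ) :
    (∫ x, g x * h x ∂μ) ^ 2 ≤ (∫ x, g x ^ 2 * w x ∂μ) * ∫ x, h x ^ 2 / w x ∂μ := by
  have hquad : ∀ s : ℝ, 0 ≤ (∫ x, g x ^ 2 * w x ∂μ) * (s * s) +
      2 * (∫ x, g x * h x ∂μ) * s + ∫ x, h x ^ 2 / w x ∂μ := by
    intro s
    have hsq : ∀ x, (s * g x * w x + h x) ^ 2 / w x =
        s * s * (g x ^ 2 * w x) + 2 * s * (g x * h x) + h x ^ 2 / w x := by
      intro x
      have := (hw x).ne'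
      field_simp
      ring
    have hexp : ∫ x, (s * g x * w x + h x) ^ 2 / w x ∂μ = (∫ x, g x ^ 2 * w x ∂μ) * (s * s) +
        2 * (∫ x, g x * h x ∂μ) * s + ∫ x, h x ^ 2 / w x ∂μ := by
      have hgw' := hgw.const_mul (s * s)
      have hgh' := hgh.const_mul (2 * s)
      simp only [hsq]
      rw [integral_add ?_ hhw, integral_add hgw' hgh', integral_const_mul,
        integral_const_mul]
      · ring
      · exact hgw'.add hgh'
    rw [← hexp]
    exact integral_nonneg fun x => div_nonneg (sq_nonneg _) (hw x).le
  -- a nonnegative quadratic in `s` has nonpositive discriminant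
  have := discrim_le_zero hquad
  rw [discrim] at this
  nlinarith

end WeightedCauchySchwarz

section Cdf

variable {ρ Φ : ℝ → ℝ}

lemma cdf_nonneg (hρ0 : ∀ x, 0 ≤ ρ x) (hΦ : ∀ x, Φ x = ∫ t in Iic x, ρ t) (x : ℝ) :
    0 ≤ Φ x := by
  rw [hΦ x]
  exact setIntegral_nonneg measurableSet_Iic fun t _ => hρ0 t

lemma cdf_le_one (hρ0 : ∀ x, 0 ≤ ρ x) (hρint : Integrable ρ) (hρ1 : ∫ x, ρ x = 1)
    (hΦ : ∀ x, Φ x = ∫ t in Iic x, ρ t) (x : ℝ) : Φ x ≤ 1 := by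
  rw [hΦ x, ← hρ1]
  exact setIntegral_le_integral hρint (.of_forall hρ0)

lemma monotone_cdf (hρ0 : ∀ x, 0 ≤ ρ x) (hρint : Integrable ρ)
    (hΦ : ∀ x, Φ x = ∫ t in Iic x, ρ t) : Monotone Φ := fun a b hab => by
  rw [hΦ a, hΦ b]
  exact setIntegral_mono_set hρint.integrableOn (.of_forall hρ0)
    (Iic_subset_Iic.mpr hab).eventuallyLE

lemma mul_affine_ite_lt_eq_indicator (a b t y : ℝ) :
    ρ y * (a * (if y < t then 1 else 0) + b) = a * (Iio t).indicator ρ y + b * ρ y := by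
  by_cases hy : y < t <;> simp [hy] <;> ring

lemma integrable_mul_affine_ite_lt (hρint : Integrable ρ) (a b t : ℝ) :
    Integrable fun y => ρ y * (a * (if y < t then 1 else 0) + b) := by
  simp only [mul_affine_ite_lt_eq_indicator]
  exact ((hρint.indicator measurableSet_Iio).const_mul a).add (hρint.const_mul b)

lemma integral_mul_affine_ite_lt (hρint : Integrable ρ) (hρ1 : ∫ x, ρ x = 1)
    (hΦ : ∀ x, Φ x = ∫ t in Iic x, ρ t) (a b t : ℝ) :
    ∫ y, ρ y * (a * (if y < t then 1 else 0) + b) = a * Φ t + b := by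
  simp only [mul_affine_ite_lt_eq_indicator]
  rw [integral_add ((hρint.indicator measurableSet_Iio).const_mul a) (hρint.const_mul b),
    integral_const_mul, integral_const_mul, integral_indicator measurableSet_Iio, hρ1, hΦ,
    integral_Iic_eq_integral_Iio, mul_one]

end Cdf

lemma abs_sub_ite_eq {s : ℝ} (h0 : 0 ≤ s) (h1 : s ≤ 1) (p : Prop) [Decidable p] :
    |s - if p then 1 else 0| = (1 - 2 * if p then 1 else 0) * s + if p then 1 else 0 := by
  split_ifs
  · rw [abs_of_nonpos (by linarith)]; ring
  · rw [abs_of_nonneg (by linarith)]; ring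

noncomputable def cdfKernel (Φ : ℝ → ℝ) (x t : ℝ) : ℝ := Φ t - if x < t then 1 else 0

section CdfKernel

variable {ρ Φ : ℝ → ℝ}

lemma measurable_cdfKernel (hΦ : Measurable Φ) : Measurable (Function.uncurry (cdfKernel Φ)) :=
  (hΦ.comp measurable_snd).sub
    (Measurable.ite (measurableSet_lt measurable_fst measurable_snd) measurable_const
      measurable_const)

lemma abs_cdfKernel {t : ℝ} (h0 : 0 ≤ Φ t) (h1 : Φ t ≤ 1) (x : ℝ) :
    |cdfKernel Φ x t| = (1 - 2 * if x < t then 1 else 0) * Φ t + if x < t then 1 else 0 :=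
  abs_sub_ite_eq h0 h1 _

lemma cdfKernel_sq (x t : ℝ) :
    cdfKernel Φ x t ^ 2 = (1 - 2 * Φ t) * (if x < t then 1 else 0) + Φ t ^ 2 := by
  unfold cdfKernel
  split_ifs <;> ring

lemma integral_mul_cdfKernel_sq (hρint : Integrable ρ) (hρ1 : ∫ x, ρ x = 1)
    (hΦ : ∀ x, Φ x = ∫ t in Iic x, ρ t) (t : ℝ) :
    ∫ x, ρ x * cdfKernel Φ x t ^ 2 = Φ t * (1 - Φ t) := by
  simp only [cdfKernel_sq]
  rw [integral_mul_affine_ite_lt hρint hρ1 hΦ]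
  ring

lemma integrable_abs_cdfKernel_div {ψ : ℝ → ℝ} (hΦ0 : ∀ t, 0 ≤ Φ t) (hΦ1 : ∀ t, Φ t ≤ 1)
    {x : ℝ} (h : IntegrableOn (fun t => Φ t / ψ t) (Iic x) ∧
      IntegrableOn (fun t => (1 - Φ t) / ψ t) (Ici x)) :
    Integrable fun t => |cdfKernel Φ x t| / ψ t := by
  rw [← integrableOn_univ, ← Iic_union_Ioi (a := x)]
  refine (h.1.congr_fun (fun t ht => ?_) measurableSet_Iic).union
    ((h.2.mono_set Ioi_subset_Ici_self).congr_fun (fun t ht => ?_) measurableSet_Ioi)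
  · rw [cdfKernel, if_neg (not_lt.mpr ht), sub_zero, abs_of_nonneg (hΦ0 t)]
  · rw [cdfKernel, if_pos (mem_Ioi.mp ht), abs_of_nonpos (by linarith [hΦ1 t]), neg_sub]

lemma integrable_cdfKernel_sq_div {ψ : ℝ → ℝ} (hΦ0 : ∀ t, 0 ≤ Φ t) (hΦ1 : ∀ t, Φ t ≤ 1)
    (hΦm : Measurable Φ) {x : ℝ} (h : IntegrableOn (fun t => Φ t / ψ t) (Iic x) ∧
      IntegrableOn (fun t => (1 - Φ t) / ψ t) (Ici x)) :
    Integrable fun t => cdfKernel Φ x t ^ 2 / ψ t := by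
  have hbound : ∀ t, ‖|cdfKernel Φ x t|‖ ≤ 1 := fun t => by
    rw [Real.norm_eq_abs, abs_abs, abs_cdfKernel (hΦ0 t) (hΦ1 t)]
    split_ifs <;> linarith [hΦ0 t, hΦ1 t]
  refine ((integrable_abs_cdfKernel_div hΦ0 hΦ1 h).bdd_mul
    (measurable_cdfKernel hΦm).of_uncurry_left.abs.aestronglyMeasurable
    (.of_forall hbound)).congr (.of_forall fun t => ?_)
  dsimp only
  rw [← mul_div_assoc, abs_mul_abs_self, sq]

end CdfKernel

section Representation

variable {ρ Φ f f' : ℝ → ℝ}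

lemma continuous_of_sub_eq_intervalIntegral (hf' : LocallyIntegrable f')
    (hAC : ∀ a b, f b - f a = ∫ t in a..b, f' t) : Continuous f := by
  have hprim : Continuous fun x => f 0 + ∫ t in (0 : ℝ)..x, f' t :=
    continuous_const.add (intervalIntegral.continuous_primitive
      (fun a b => (hf'.integrableOn_isCompact isCompact_uIcc).intervalIntegrable) 0)
  exact hprim.congr fun x => by linarith [hAC 0 x]

lemma integral_mul_ite_lt_sub_ite_lt (hf' : LocallyIntegrable f')
    (hAC : ∀ a b, f b - f a = ∫ t in a..b, f' t) (x y : ℝ) :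
    ∫ t, f' t * ((if y < t then 1 else 0) - if x < t then 1 else 0) = f x - f y := by
  have hIoc : ∀ a b, Integrable ((Ioc a b).indicator f') := fun a b =>
    (integrable_indicator_iff measurableSet_Ioc).2
      ((hf'.integrableOn_isCompact isCompact_Icc).mono_set Ioc_subset_Icc_self)
  -- `𝟙{y < t} - 𝟙{x < t}` is the signed indicator of the interval between `y` and `x`
  have hpt : ∀ t, f' t * ((if y < t then 1 else 0) - if x < t then 1 else 0) =
      (Ioc y x).indicator f' t - (Ioc x y).indicator f' t := by
    intro t
    simp only [indicator_apply, mem_Ioc]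
    split_ifs <;> grind
  simp only [hpt]
  rw [integral_sub (hIoc y x) (hIoc x y), integral_indicator measurableSet_Ioc,
    integral_indicator measurableSet_Ioc, hAC y x]
  rfl

lemma integrable_prod_mul_mul_ite_lt_sub_ite_lt (hρ0 : ∀ x, 0 ≤ ρ x) (hρint : Integrable ρ)
    (hρ1 : ∫ x, ρ x = 1) (hΦ : ∀ x, Φ x = ∫ t in Iic x, ρ t) (hf' : LocallyIntegrable f')
    {x : ℝ} (hK : Integrable fun t => f' t * cdfKernel Φ x t) :
    Integrable (Function.uncurry fun y t =>
      ρ y * (f' t * ((if y < t then 1 else 0) - if x < t then 1 else 0))) (volume.prod volume) := by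
  have hm : AEStronglyMeasurable (Function.uncurry fun y t =>
      ρ y * (f' t * ((if y < t then 1 else 0) - if x < t then 1 else 0 : ℝ)))
      (volume.prod volume) := by
    refine hρint.aestronglyMeasurable.comp_fst.mul
      (hf'.aestronglyMeasurable.comp_snd.mul (Measurable.aestronglyMeasurable ?_))
    exact (Measurable.ite (measurableSet_lt measurable_fst measurable_snd) measurable_const
      measurable_const).sub (Measurable.ite (measurableSet_lt measurable_const measurable_snd)
        measurable_const measurable_const)
  refine (integrable_prod_iff' hm).2
    ⟨.of_forall fun t => ?_, hK.norm.congr (.of_forall fun t => ?_)⟩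
  · refine ((integrable_mul_affine_ite_lt hρint 1 (-if x < t then 1 else 0) t).const_mul
      (f' t)).congr (.of_forall fun y => ?_)
    simp only [Function.uncurry_apply_pair]
    ring
  · have habs : ∀ y, ‖ρ y * (f' t * ((if y < t then 1 else 0) - if x < t then 1 else 0))‖ =
        |f' t| * (ρ y * ((1 - 2 * if x < t then 1 else 0) * (if y < t then 1 else 0) +
          if x < t then 1 else 0)) := fun y => by
      have he : (0 : ℝ) ≤ if y < t then 1 else 0 := by split_ifs <;> norm_num
      have he' : (if y < t then 1 else 0 : ℝ) ≤ 1 := by split_ifs <;> norm_num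
      rw [Real.norm_eq_abs, abs_mul, abs_mul, abs_of_nonneg (hρ0 y), abs_sub_ite_eq he he']
      ring
    simp only [Function.uncurry_apply_pair, habs]
    rw [integral_const_mul, integral_mul_affine_ite_lt hρint hρ1 hΦ, Real.norm_eq_abs, abs_mul,
      abs_cdfKernel (cdf_nonneg hρ0 hΦ t) (cdf_le_one hρ0 hρint hρ1 hΦ t)]

lemma sub_integral_mul_eq_integral_mul_cdfKernel (hρ0 : ∀ x, 0 ≤ ρ x) (hρint : Integrable ρ)
    (hρ1 : ∫ x, ρ x = 1) (hΦ : ∀ x, Φ x = ∫ t in Iic x, ρ t) (hf' : LocallyIntegrable f')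
    (hAC : ∀ a b, f b - f a = ∫ t in a..b, f' t) (hfρ : Integrable fun y => f y * ρ y)
    {x : ℝ} (hK : Integrable fun t => f' t * cdfKernel Φ x t) :
    f x - ∫ y, f y * ρ y = ∫ t, f' t * cdfKernel Φ x t :=
  calc f x - ∫ y, f y * ρ y = ∫ y, (f x * ρ y - f y * ρ y) := by
        rw [integral_sub (hρint.const_mul _) hfρ, integral_const_mul, hρ1, mul_one]
    _ = ∫ y, ∫ t, ρ y * (f' t * ((if y < t then 1 else 0) - if x < t then 1 else 0)) := by
        simp only [integral_const_mul, integral_mul_ite_lt_sub_ite_lt hf' hAC]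
        congr 1; ext y; ring
    _ = ∫ t, ∫ y, ρ y * (f' t * ((if y < t then 1 else 0) - if x < t then 1 else 0)) :=
        integral_integral_swap
          (integrable_prod_mul_mul_ite_lt_sub_ite_lt hρ0 hρint hρ1 hΦ hf' hK)
    _ = ∫ t, f' t * cdfKernel Φ x t := by
        congr 1; ext t
        rw [cdfKernel, ← one_mul (Φ t), sub_eq_add_neg (1 * Φ t),
          ← integral_mul_affine_ite_lt hρint hρ1 hΦ, ← integral_const_mul]
        congr 1; ext y; ring

lemma sq_sub_integral_mul_le {ψ : ℝ → ℝ} (hρ0 : ∀ x, 0 ≤ ρ x) (hρint : Integrable ρ)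
    (hρ1 : ∫ x, ρ x = 1) (hΦ : ∀ x, Φ x = ∫ t in Iic x, ρ t) (hψ : ∀ t, 0 < ψ t)
    (hf' : LocallyIntegrable f') (hAC : ∀ a b, f b - f a = ∫ t in a..b, f' t)
    (hfρ : Integrable fun y => f y * ρ y) (hf'ψ : Integrable fun t => f' t ^ 2 * ψ t) {x : ℝ}
    (hKψ : Integrable fun t => cdfKernel Φ x t ^ 2 / ψ t) :
    (f x - ∫ y, f y * ρ y) ^ 2 ≤ (∫ t, f' t ^ 2 * ψ t) * ∫ t, cdfKernel Φ x t ^ 2 / ψ t := by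
  have hKm := (measurable_cdfKernel (monotone_cdf hρ0 hρint hΦ).measurable).of_uncurry_left (x := x)
  have hK := integrable_mul_of_sq_mul_of_sq_div hf'.aestronglyMeasurable hKm.aestronglyMeasurable
    hψ hf'ψ hKψ
  rw [sub_integral_mul_eq_integral_mul_cdfKernel hρ0 hρint hρ1 hΦ hf' hAC hfρ hK]
  exact sq_integral_mul_le_of_pos_weight hψ hf'ψ hKψ hK

end Representation

lemma lintegral_mul_integral_cdfKernel_sq_div {ρ Φ ψ : ℝ → ℝ} (hρ0 : ∀ x, 0 ≤ ρ x)
    (hρint : Integrable ρ) (hρ1 : ∫ x, ρ x = 1) (hΦ : ∀ x, Φ x = ∫ t in Iic x, ρ t)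
    (hψ0 : ∀ t, 0 ≤ ψ t) (hψ : AEMeasurable ψ)
    (hKψ : ∀ x, Integrable fun t => cdfKernel Φ x t ^ 2 / ψ t)
    (hC : Integrable fun t => Φ t * (1 - Φ t) / ψ t) :
    ∫⁻ x, ENNReal.ofReal (ρ x * ∫ t, cdfKernel Φ x t ^ 2 / ψ t) =
      ENNReal.ofReal (∫ t, Φ t * (1 - Φ t) / ψ t) := by
  have hΦm : Measurable Φ := (monotone_cdf hρ0 hρint hΦ).measurable
  have hnn : ∀ x t, 0 ≤ ρ x * (cdfKernel Φ x t ^ 2 / ψ t) := fun x t =>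
    mul_nonneg (hρ0 x) (div_nonneg (sq_nonneg _) (hψ0 t))
  have hmeas : AEMeasurable (Function.uncurry fun x t =>
      ENNReal.ofReal (ρ x * (cdfKernel Φ x t ^ 2 / ψ t))) (volume.prod volume) :=
    ENNReal.measurable_ofReal.comp_aemeasurable (hρint.aemeasurable.comp_fst.mul
      (((measurable_cdfKernel hΦm).pow_const 2).aemeasurable.div hψ.comp_snd))
  have hslice : ∀ t, Integrable fun x => ρ x * (cdfKernel Φ x t ^ 2 / ψ t) := fun t => by
    simp only [← mul_div_assoc, cdfKernel_sq]
    exact (integrable_mul_affine_ite_lt hρint _ _ t).div_const _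
  calc ∫⁻ x, ENNReal.ofReal (ρ x * ∫ t, cdfKernel Φ x t ^ 2 / ψ t)
      = ∫⁻ x, ∫⁻ t, ENNReal.ofReal (ρ x * (cdfKernel Φ x t ^ 2 / ψ t)) := by
        refine lintegral_congr fun x => ?_
        rw [← integral_const_mul,
          ofReal_integral_eq_lintegral_ofReal ((hKψ x).const_mul _) (.of_forall (hnn x))]
    _ = ∫⁻ t, ∫⁻ x, ENNReal.ofReal (ρ x * (cdfKernel Φ x t ^ 2 / ψ t)) :=
        lintegral_lintegral_swap hmeas
    _ = ∫⁻ t, ENNReal.ofReal (Φ t * (1 - Φ t) / ψ t) := by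
        refine lintegral_congr fun t => ?_
        rw [← ofReal_integral_eq_lintegral_ofReal (hslice t) (.of_forall fun x => hnn x t)]
        simp only [← mul_div_assoc]
        rw [integral_div, integral_mul_cdfKernel_sq hρint hρ1 hΦ]
    _ = ENNReal.ofReal (∫ t, Φ t * (1 - Φ t) / ψ t) := by
        refine (ofReal_integral_eq_lintegral_ofReal hC (.of_forall fun t => ?_)).symm
        exact div_nonneg (mul_nonneg (cdf_nonneg hρ0 hΦ t)
          (sub_nonneg.2 (cdf_le_one hρ0 hρint hρ1 hΦ t))) (hψ0 t)

lemma lintegral_sub_integral_sq_mul_le {ρ Φ ψ f f' : ℝ → ℝ} (hρ0 : ∀ x, 0 ≤ ρ x)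
    (hρint : Integrable ρ) (hρ1 : ∫ x, ρ x = 1) (hΦ : ∀ x, Φ x = ∫ t in Iic x, ρ t)
    (hψ : ∀ t, 0 < ψ t) (hψm : AEMeasurable ψ) (hf' : LocallyIntegrable f')
    (hAC : ∀ a b, f b - f a = ∫ t in a..b, f' t) (hfρ : Integrable fun y => f y * ρ y)
    (hf'ψ : Integrable fun t => f' t ^ 2 * ψ t)
    (hKψ : ∀ x, Integrable fun t => cdfKernel Φ x t ^ 2 / ψ t)
    (hC : Integrable fun t => Φ t * (1 - Φ t) / ψ t) :
    ∫⁻ x, ENNReal.ofReal ((f x - ∫ y, f y * ρ y) ^ 2 * ρ x) ≤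
      ENNReal.ofReal ((∫ t, f' t ^ 2 * ψ t) * ∫ t, Φ t * (1 - Φ t) / ψ t) := by
  have hA : 0 ≤ ∫ t, f' t ^ 2 * ψ t := integral_nonneg fun t => mul_nonneg (sq_nonneg _) (hψ t).le
  calc ∫⁻ x, ENNReal.ofReal ((f x - ∫ y, f y * ρ y) ^ 2 * ρ x)
      ≤ ∫⁻ x, ENNReal.ofReal (∫ t, f' t ^ 2 * ψ t) *
          ENNReal.ofReal (ρ x * ∫ t, cdfKernel Φ x t ^ 2 / ψ t) := by
        refine lintegral_mono fun x => ?_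
        rw [← ENNReal.ofReal_mul hA, mul_left_comm, mul_comm _ (ρ x)]
        exact ENNReal.ofReal_le_ofReal (mul_le_mul_of_nonneg_left
          (sq_sub_integral_mul_le hρ0 hρint hρ1 hΦ hψ hf' hAC hfρ hf'ψ (hKψ x)) (hρ0 x))
    _ = ENNReal.ofReal ((∫ t, f' t ^ 2 * ψ t) * ∫ t, Φ t * (1 - Φ t) / ψ t) := by
        rw [lintegral_const_mul' _ _ ENNReal.ofReal_ne_top,
          lintegral_mul_integral_cdfKernel_sq_div hρ0 hρint hρ1 hΦ (fun t => (hψ t).le) hψm hKψ hC,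
          ← ENNReal.ofReal_mul hA]

section Variance

variable {α : Type*} [MeasurableSpace α] {μ : Measure α} {ρ g : α → ℝ}

lemma integrable_and_integral_le_of_lintegral_ofReal_le (hg0 : ∀ x, 0 ≤ g x)
    (hg : AEStronglyMeasurable g μ) {B : ℝ} (hB : 0 ≤ B)
    (h : ∫⁻ x, ENNReal.ofReal (g x) ∂μ ≤ ENNReal.ofReal B) :
    Integrable g μ ∧ ∫ x, g x ∂μ ≤ B := by
  refine ⟨⟨hg, (hasFiniteIntegral_iff_ofReal (.of_forall hg0)).2
    (h.trans_lt ENNReal.ofReal_lt_top)⟩, ?_⟩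
  rw [integral_eq_lintegral_of_nonneg_ae (.of_forall hg0) hg]
  exact ENNReal.toReal_le_of_le_ofReal hB h

lemma integrable_sq_mul_of_integrable_sub_sq_mul (hρ : Integrable ρ μ)
    (hgρ : Integrable (fun x => g x * ρ x) μ) {m : ℝ}
    (h : Integrable (fun x => (g x - m) ^ 2 * ρ x) μ) :
    Integrable (fun x => g x ^ 2 * ρ x) μ :=
  ((h.add (hgρ.const_mul (2 * m))).sub (hρ.const_mul (m ^ 2))).congr
    (.of_forall fun x => by simp only [Pi.add_apply, Pi.sub_apply]; ring)

lemma integral_sq_mul_eq_integral_sub_sq_mul_add_sq (hρ : Integrable ρ μ)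
    (hρ1 : ∫ x, ρ x ∂μ = 1) (hgρ : Integrable (fun x => g x * ρ x) μ)
    (h : Integrable (fun x => (g x - ∫ y, g y * ρ y ∂μ) ^ 2 * ρ x) μ) :
    ∫ x, g x ^ 2 * ρ x ∂μ = ∫ x, (g x - ∫ y, g y * ρ y ∂μ) ^ 2 * ρ x ∂μ +
      (∫ y, g y * ρ y ∂μ) ^ 2 := by
  set m := ∫ y, g y * ρ y ∂μ
  have hpt : ∀ x, g x ^ 2 * ρ x = ((g x - m) ^ 2 * ρ x + 2 * m * (g x * ρ x)) - m ^ 2 * ρ x :=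
    fun x => by ring
  simp only [hpt]
  rw [integral_sub ?_ (hρ.const_mul _), integral_add h (hgρ.const_mul _),
    integral_const_mul, integral_const_mul, hρ1]
  · ring
  · exact h.add (hgρ.const_mul _)

lemma lintegral_sq_mul_le_of_lintegral_sub_sq_mul_le (hρ0 : ∀ x, 0 ≤ ρ x) (hρ : Integrable ρ μ)
    (hρ1 : ∫ x, ρ x ∂μ = 1) (hg : AEStronglyMeasurable g μ)
    (hgρ : Integrable (fun x => g x * ρ x) μ) {B : ℝ} (hB : 0 ≤ B)
    (h : ∫⁻ x, ENNReal.ofReal ((g x - ∫ y, g y * ρ y ∂μ) ^ 2 * ρ x) ∂μ ≤ ENNReal.ofReal B) :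
    ∫⁻ x, ENNReal.ofReal (g x ^ 2 * ρ x) ∂μ ≤ ENNReal.ofReal (B + (∫ y, g y * ρ y ∂μ) ^ 2) := by
  obtain ⟨hint, hle⟩ := integrable_and_integral_le_of_lintegral_ofReal_le
    (g := fun x => (g x - ∫ y, g y * ρ y ∂μ) ^ 2 * ρ x) (fun x => mul_nonneg (sq_nonneg _) (hρ0 x))
    (((hg.sub aestronglyMeasurable_const).pow 2).mul hρ.aestronglyMeasurable) hB h
  rw [← ofReal_integral_eq_lintegral_ofReal (integrable_sq_mul_of_integrable_sub_sq_mul hρ hgρ hint)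
      (.of_forall fun x => mul_nonneg (sq_nonneg _) (hρ0 x)),
    integral_sq_mul_eq_integral_sub_sq_mul_add_sq hρ hρ1 hgρ hint]
  exact ENNReal.ofReal_le_ofReal (by linarith)

end Variance

lemma mul_add_sq_le_one_add_mul_mul {γ A C : ℝ} (hγ : 0 < γ) (hA : 0 ≤ A) (hC : 0 ≤ C) (m : ℝ) :
    A * C + m ^ 2 ≤ (1 + γ * C) * (m ^ 2 + 1 / γ * A) := by
  have h : (1 + γ * C) * (m ^ 2 + 1 / γ * A) = A * C + m ^ 2 + (γ * C * m ^ 2 + 1 / γ * A) := by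
    field_simp
    ring
  rw [h]
  have := mul_nonneg (mul_nonneg hγ.le hC) (sq_nonneg m)
  have := mul_nonneg (one_div_nonneg.2 hγ.le) hA
  linarith

theorem stmt13_general (ρ ψ Φ : ℝ → ℝ) (γ : ℝ) (hγ : 0 < γ)
    (hρpos : ∀ x, 0 < ρ x) (hρint : Integrable ρ) (hρ1 : ∫ x, ρ x = 1)
    (hψpos : ∀ x, 0 < ψ x)
    (hψloc : LocallyIntegrable ψ)
    (hΦ : ∀ x, Φ x = ∫ t in Iic x, ρ t)
    (hstrong : ∀ c : ℝ, IntegrableOn (fun t => Φ t / ψ t) (Iic c) ∧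
        IntegrableOn (fun t => (1 - Φ t) / ψ t) (Ici c))
    (hC : Integrable (fun t => Φ t * (1 - Φ t) / ψ t))
    (f f' : ℝ → ℝ)
    (hf'loc : LocallyIntegrable f')
    (hAC : ∀ a b : ℝ, f b - f a = ∫ t in a..b, f' t)
    (hfL1 : Integrable (fun x => |f x| * ρ x))
    (hf'L2 : Integrable (fun x => f' x ^ 2 * ψ x)) :
    (∫⁻ x, ENNReal.ofReal (f x ^ 2 * ρ x)) ≤
      ENNReal.ofReal ((1 + γ * ∫ t, Φ t * (1 - Φ t) / ψ t) *
        ((∫ x, f x * ρ x) ^ 2 + (1 / γ) * ∫ x, f' x ^ 2 * ψ x)) := by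
  have hρ0 : ∀ x, 0 ≤ ρ x := fun x => (hρpos x).le
  have hΦ0 := cdf_nonneg hρ0 hΦ
  have hΦ1 := cdf_le_one hρ0 hρint hρ1 hΦ
  have hfm : Measurable f := (continuous_of_sub_eq_intervalIntegral hf'loc hAC).measurable
  have hfρ : Integrable fun x => f x * ρ x :=
    hfL1.mono' (hfm.aestronglyMeasurable.mul hρint.aestronglyMeasurable) (.of_forall fun x => by
      rw [norm_mul, Real.norm_eq_abs, Real.norm_eq_abs, abs_of_nonneg (hρ0 x)])
  have hKψ x := integrable_cdfKernel_sq_div hΦ0 hΦ1 (monotone_cdf hρ0 hρint hΦ).measurable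
    (hstrong x)
  have hA : 0 ≤ ∫ x, f' x ^ 2 * ψ x :=
    integral_nonneg fun x => mul_nonneg (sq_nonneg _) (hψpos x).le
  have hC0 : 0 ≤ ∫ t, Φ t * (1 - Φ t) / ψ t := integral_nonneg fun t =>
    div_nonneg (mul_nonneg (hΦ0 t) (sub_nonneg.2 (hΦ1 t))) (hψpos t).le
  have hvar := lintegral_sub_integral_sq_mul_le hρ0 hρint hρ1 hΦ hψpos
    hψloc.aestronglyMeasurable.aemeasurable hf'loc hAC hfρ hf'L2 hKψ hC
  refine (lintegral_sq_mul_le_of_lintegral_sub_sq_mul_le hρ0 hρint hρ1 hfm.aestronglyMeasurable hfρ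
    (mul_nonneg hA hC0) hvar).trans (ENNReal.ofReal_le_ofReal ?_)
  exact mul_add_sq_le_one_add_mul_mul hγ hA hC0 _

theorem stmt13 (ρ ψ Φ : ℝ → ℝ) (γ : ℝ) (hγ : 0 < γ)
    (hρpos : ∀ x, 0 < ρ x) (hρint : Integrable ρ) (hρ1 : ∫ x, ρ x = 1)
    (hψpos : ∀ x, 0 < ψ x)
    (hψloc : LocallyIntegrable ψ)
    (hψinvloc : LocallyIntegrable (fun x => 1 / ψ x))
    (hΦ : ∀ x, Φ x = ∫ t in Iic x, ρ t)
    (hstrong : ∀ c : ℝ, IntegrableOn (fun t => Φ t / ψ t) (Iic c) ∧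
        IntegrableOn (fun t => (1 - Φ t) / ψ t) (Ici c))
    (hC : Integrable (fun t => Φ t * (1 - Φ t) / ψ t))
    (f f' : ℝ → ℝ)
    (hf'loc : LocallyIntegrable f')
    (hAC : ∀ a b : ℝ, f b - f a = ∫ t in a..b, f' t)
    (hfL1 : Integrable (fun x => |f x| * ρ x))
    (hf'L2 : Integrable (fun x => f' x ^ 2 * ψ x)) :
    (∫⁻ x, ENNReal.ofReal (f x ^ 2 * ρ x)) ≤
      ENNReal.ofReal ((1 + γ * ∫ t, Φ t * (1 - Φ t) / ψ t) *
        ((∫ x, f x * ρ x) ^ 2 + (1 / γ) * ∫ x, f' x ^ 2 * ψ x)) :=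
  stmt13_general ρ ψ Φ γ hγ hρpos hρint hρ1 hψpos hψloc hΦ hstrong hC f f' hf'loc hAC hfL1 hf'L2
end

section
/- Let ρ be the standard normal density and ψ(x) = exp(-(3/4)x²). Then f(x) = 1/√(ρ(x)) = (2π)^{1/4} exp(x²/4) satisfies f ∈ L¹_ρ and f' ∈ L²_ψ (so f ∈ 𝒲), but f ∉ L²_ρ (so f ∉ ℋ). Hence 𝒲 is strictly larger than ℋ for this choice of weights. -/
open MeasureTheory Real Set

/-! Up to constants, `|f| ρ = exp (-x²/4)` and `f'² ψ = x² exp (-x²/4)` are integrable Gaussian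
moments, while `f² ρ` is identically `1`, which is not integrable on `ℝ`. -/

lemma integrable_sq_mul_exp_neg_mul_sq {b : ℝ} (hb : 0 < b) :
    Integrable fun x : ℝ => x ^ 2 * exp (-b * x ^ 2) := by
  simpa only [rpow_two] using integrable_rpow_mul_exp_neg_mul_sq hb (s := 2) (by norm_num)

lemma not_integrable_const_real {c : ℝ} (hc : c ≠ 0) : ¬ Integrable fun _ : ℝ => c := by
  rw [integrable_const_iff_isFiniteMeasure hc]
  exact fun _ => measure_ne_top volume univ Real.volume_univ

lemma rpow_one_div_four_sq {y : ℝ} (hy : 0 ≤ y) : (y ^ (1 / 4 : ℝ)) ^ 2 = √y := by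
  rw [← rpow_natCast, ← rpow_mul hy, sqrt_eq_rpow]
  norm_num

lemma deriv_const_mul_exp_sq_div_four (c x : ℝ) :
    deriv (fun x => c * exp (x ^ 2 / 4)) x = c * x / 2 * exp (x ^ 2 / 4) := by
  have h : HasDerivAt (fun x : ℝ => x ^ 2 / 4) (2 * x / 4) x := by
    simpa using (hasDerivAt_pow 2 x).div_const 4
  rw [(h.exp.const_mul c).deriv]
  ring

theorem stmt15 (ρ ψ f : ℝ → ℝ)
    (hρ : ∀ x, ρ x = (Real.sqrt (2 * π))⁻¹ * Real.exp (-x ^ 2 / 2))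
    (hψ : ∀ x, ψ x = Real.exp (-(3 / 4) * x ^ 2))
    (hf : ∀ x, f x = (2 * π) ^ ((1 : ℝ) / 4) * Real.exp (x ^ 2 / 4)) :
    Integrable (fun x => |f x| * ρ x) ∧
    Integrable (fun x => (deriv f x) ^ 2 * ψ x) ∧
    ¬ Integrable (fun x => f x ^ 2 * ρ x) := by
  obtain rfl : ρ = _ := funext hρ
  obtain rfl : ψ = _ := funext hψ
  obtain rfl : f = _ := funext hf
  set c := (2 * π) ^ ((1 : ℝ) / 4)
  have hc_sq : c ^ 2 = √(2 * π) := rpow_one_div_four_sq (by positivity)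
  refine ⟨?_, ?_, ?_⟩
  · convert (integrable_exp_neg_mul_sq (b := 1 / 4) (by norm_num)).const_mul
      (c * (√(2 * π))⁻¹) using 2 with x
    rw [abs_of_pos (by positivity), mul_mul_mul_comm, ← exp_add]
    ring_nf
  · convert (integrable_sq_mul_exp_neg_mul_sq (b := 1 / 4) (by norm_num)).const_mul
      (c ^ 2 / 4) using 2 with x
    rw [deriv_const_mul_exp_sq_div_four, mul_pow, mul_assoc, ← exp_nat_mul, ← exp_add]
    ring_nf
  · convert not_integrable_const_real one_ne_zero using 2
    funext x
    dsimp only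
    rw [mul_pow, hc_sq, mul_mul_mul_comm, mul_inv_cancel₀ (by positivity), ← exp_nat_mul,
      ← exp_add, one_mul]
    ring_nf
    exact exp_zero
end

section
/- Let g ∈ L²_ψ(ℝ), let ρ be a probability density with CDF Φ, and assume the weaker condition ∫_{-∞}^a Φ²/ψ < ∞ and ∫_a^∞ (1-Φ)²/ψ < ∞. Then for any a ∈ ℝ, the function x ↦ ∫_a^x g(t) dt is integrable against ρ, with |∫_{-∞}^∞ (∫_a^x g(t) dt) ρ(x) dx| ≤ ‖g‖_{L²_ψ} [ (∫_{-∞}^a Φ²/ψ)^{1/2} + (∫_a^∞ (1-Φ)²/ψ)^{1/2} ]. -/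
open MeasureTheory Real Set

/-!
Writing `∫_a^x g = ∫ g(t) (1_{a<t≤x} - 1_{x<t≤a}) dt` and exchanging the order of integration,
the integral becomes `∫_{t>a} g (1-Φ) - ∫_{t≤a} g Φ`, because `∫_{x≥t} ρ = 1 - Φ(t)` and
`∫_{x<t} ρ = Φ(t)`. The weighted Cauchy–Schwarz inequality `|∫ g h| ≤ ‖g‖_{L²_ψ} ‖h‖_{L²_{1/ψ}}`,
applied with `h = 1 - Φ` and `h = Φ`, bounds both terms and also gives the integrability
that justifies Fubini's theorem.
-/

lemma abs_mul_eq_sqrt_sq_mul_mul_sqrt_sq_div {a b p : ℝ} (hp : 0 < p) :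
    |a * b| = √(a ^ 2 * p) * √(b ^ 2 / p) := by
  rw [← sqrt_mul (mul_nonneg (sq_nonneg a) hp.le), ← sqrt_sq_eq_abs]
  congr 1
  field_simp

section CauchySchwarz

variable {α : Type*} [MeasurableSpace α] {μ : Measure α}

lemma MeasureTheory.Integrable.memLp_two_sqrt {f : α → ℝ} (hf : Integrable f μ) (hf0 : 0 ≤ f) :
    MemLp (fun t => √(f t)) 2 μ :=
  (memLp_two_iff_integrable_sq (continuous_sqrt.comp_aestronglyMeasurable hf.1)).2 <|
    hf.congr (.of_forall fun t => (sq_sqrt (hf0 t)).symm)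

lemma integral_mul_le_sqrt_mul_sqrt_of_nonneg {G H : α → ℝ} (hG0 : 0 ≤ᵐ[μ] G)
    (hH0 : 0 ≤ᵐ[μ] H) (hG : MemLp G 2 μ) (hH : MemLp H 2 μ) :
    ∫ t, G t * H t ∂μ ≤ √(∫ t, G t ^ 2 ∂μ) * √(∫ t, H t ^ 2 ∂μ) := by
  simpa only [rpow_two, ← sqrt_eq_rpow] using
    integral_mul_le_Lp_mul_Lq_of_nonneg HolderConjugate.two_two hG0 hH0
      (by simpa using hG) (by simpa using hH)

variable {ψ g h : α → ℝ}

lemma MeasureTheory.Integrable.mul_of_sq_mul_of_sq_div (hψ : ∀ t, 0 < ψ t)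
    (hg : Integrable (fun t => g t ^ 2 * ψ t) μ) (hh : Integrable (fun t => h t ^ 2 / ψ t) μ)
    (hm : AEStronglyMeasurable (fun t => g t * h t) μ) :
    Integrable (fun t => g t * h t) μ :=
  ((hg.memLp_two_sqrt fun t => mul_nonneg (sq_nonneg _) (hψ t).le).integrable_mul
      (hh.memLp_two_sqrt fun t => div_nonneg (sq_nonneg _) (hψ t).le)).mono' hm
    (.of_forall fun t => (abs_mul_eq_sqrt_sq_mul_mul_sqrt_sq_div (hψ t)).le)

lemma abs_integral_mul_le_sqrt_mul_sqrt (hψ : ∀ t, 0 < ψ t)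
    (hg : Integrable (fun t => g t ^ 2 * ψ t) μ) (hh : Integrable (fun t => h t ^ 2 / ψ t) μ) :
    |∫ t, g t * h t ∂μ| ≤ √(∫ t, g t ^ 2 * ψ t ∂μ) * √(∫ t, h t ^ 2 / ψ t ∂μ) := by
  have hg0 : 0 ≤ fun t => g t ^ 2 * ψ t := fun t => mul_nonneg (sq_nonneg _) (hψ t).le
  have hh0 : 0 ≤ fun t => h t ^ 2 / ψ t := fun t => div_nonneg (sq_nonneg _) (hψ t).le
  calc |∫ t, g t * h t ∂μ| ≤ ∫ t, |g t * h t| ∂μ := abs_integral_le_integral_abs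
    _ = ∫ t, √(g t ^ 2 * ψ t) * √(h t ^ 2 / ψ t) ∂μ :=
      integral_congr_ae (.of_forall fun t => abs_mul_eq_sqrt_sq_mul_mul_sqrt_sq_div (hψ t))
    _ ≤ √(∫ t, √(g t ^ 2 * ψ t) ^ 2 ∂μ) * √(∫ t, √(h t ^ 2 / ψ t) ^ 2 ∂μ) :=
      integral_mul_le_sqrt_mul_sqrt_of_nonneg (.of_forall fun _ => sqrt_nonneg _)
        (.of_forall fun _ => sqrt_nonneg _) (hg.memLp_two_sqrt hg0) (hh.memLp_two_sqrt hh0)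
    _ = √(∫ t, g t ^ 2 * ψ t ∂μ) * √(∫ t, h t ^ 2 / ψ t ∂μ) := by
      simp only [sq_sqrt (hg0 _), sq_sqrt (hh0 _)]

lemma abs_setIntegral_mul_le_sqrt_mul_sqrt (hψ : ∀ t, 0 < ψ t)
    (hg : Integrable (fun t => g t ^ 2 * ψ t) μ) {s : Set α}
    (hh : IntegrableOn (fun t => h t ^ 2 / ψ t) s μ) :
    |∫ t in s, g t * h t ∂μ| ≤ √(∫ t, g t ^ 2 * ψ t ∂μ) * √(∫ t in s, h t ^ 2 / ψ t ∂μ) :=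
  (abs_integral_mul_le_sqrt_mul_sqrt hψ hg.restrict hh).trans <|
    mul_le_mul_of_nonneg_right (sqrt_le_sqrt <| setIntegral_le_integral hg <|
      .of_forall fun t => mul_nonneg (sq_nonneg _) (hψ t).le) (sqrt_nonneg _)

end CauchySchwarz

section Fubini

variable {α β : Type*} [MeasurableSpace α] [MeasurableSpace β] {μ : Measure α} {ν : Measure β}
  {S : Set (α × β)} {g : α → ℝ} {ρ : β → ℝ}

lemma integral_indicator_mul_prodMk_left (hS : MeasurableSet S) (t : α) :
    ∫ x, S.indicator (fun p => g p.1 * ρ p.2) (t, x) ∂ν =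
      g t * ∫ x in {x | (t, x) ∈ S}, ρ x ∂ν := by
  rw [← integral_const_mul]
  exact integral_indicator (f := fun x => g t * ρ x) (hS.preimage measurable_prodMk_left)

lemma integral_indicator_mul_prodMk_right (hS : MeasurableSet S) (x : β) :
    ∫ t, S.indicator (fun p => g p.1 * ρ p.2) (t, x) ∂μ =
      (∫ t in {t | (t, x) ∈ S}, g t ∂μ) * ρ x := by
  rw [← integral_mul_const]
  exact integral_indicator (f := fun t => g t * ρ x) (hS.preimage measurable_prodMk_right)

lemma integrable_indicator_mul_prod [SFinite ν] (hS : MeasurableSet S)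
    (hg : AEStronglyMeasurable g μ) (hρ : Integrable ρ ν) (hρ0 : 0 ≤ᵐ[ν] ρ)
    (hint : Integrable (fun t => g t * ∫ x in {x | (t, x) ∈ S}, ρ x ∂ν) μ) :
    Integrable (S.indicator fun p => g p.1 * ρ p.2) (μ.prod ν) := by
  have hm : AEStronglyMeasurable (fun p : α × β => g p.1 * ρ p.2) (μ.prod ν) :=
    hg.comp_fst.mul hρ.1.comp_snd
  refine (integrable_prod_iff (hm.indicator hS)).2 ⟨.of_forall fun t => ?_, ?_⟩
  · exact ((hρ.const_mul (g t)).indicator (hS.preimage measurable_prodMk_left)).congr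
      (.of_forall fun x => rfl)
  · refine hint.norm.congr (.of_forall fun t => ?_)
    have hρt : 0 ≤ ∫ x in {x | (t, x) ∈ S}, ρ x ∂ν :=
      integral_nonneg_of_ae (ae_restrict_of_ae hρ0)
    dsimp only
    rw [norm_mul, norm_of_nonneg hρt, ← integral_indicator_mul_prodMk_left (g := (‖g ·‖)) hS t]
    refine integral_congr_ae (hρ0.mono fun x (hx : 0 ≤ ρ x) => ?_)
    by_cases hx' : (t, x) ∈ S <;> simp [hx', abs_of_nonneg hx]

lemma integrable_setIntegral_mul_of_prod [SFinite μ] [SFinite ν] (hS : MeasurableSet S)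
    (hg : AEStronglyMeasurable g μ) (hρ : Integrable ρ ν) (hρ0 : 0 ≤ᵐ[ν] ρ)
    (hint : Integrable (fun t => g t * ∫ x in {x | (t, x) ∈ S}, ρ x ∂ν) μ) :
    Integrable (fun x => (∫ t in {t | (t, x) ∈ S}, g t ∂μ) * ρ x) ν :=
  (integrable_indicator_mul_prod hS hg hρ hρ0 hint).integral_prod_right.congr
    (.of_forall (integral_indicator_mul_prodMk_right hS))

lemma integral_setIntegral_mul_comm [SFinite μ] [SFinite ν] (hS : MeasurableSet S)
    (hg : AEStronglyMeasurable g μ) (hρ : Integrable ρ ν) (hρ0 : 0 ≤ᵐ[ν] ρ)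
    (hint : Integrable (fun t => g t * ∫ x in {x | (t, x) ∈ S}, ρ x ∂ν) μ) :
    ∫ x, (∫ t in {t | (t, x) ∈ S}, g t ∂μ) * ρ x ∂ν =
      ∫ t, g t * ∫ x in {x | (t, x) ∈ S}, ρ x ∂ν ∂μ := by
  simp_rw [← integral_indicator_mul_prodMk_right hS, ← integral_indicator_mul_prodMk_left hS]
  exact (integral_integral_swap (f := fun t x => S.indicator (fun p => g p.1 * ρ p.2) (t, x))
    (integrable_indicator_mul_prod hS hg hρ hρ0 hint)).symm

end Fubini

section Distribution

variable {ρ Φ g : ℝ → ℝ}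

lemma monotone_of_eq_integral_Iic (hρ0 : ∀ x, 0 ≤ ρ x) (hρ : Integrable ρ)
    (hΦ : ∀ x, Φ x = ∫ t in Iic x, ρ t) : Monotone Φ := fun s t hst => by
  simpa only [hΦ] using setIntegral_mono_set hρ.integrableOn (.of_forall hρ0)
    (Iic_subset_Iic.2 hst).eventuallyLE

lemma setIntegral_Iio_eq_of_eq_integral_Iic (hΦ : ∀ x, Φ x = ∫ t in Iic x, ρ t) (x : ℝ) :
    ∫ t in Iio x, ρ t = Φ x := by
  rw [hΦ, integral_Iic_eq_integral_Iio]

lemma setIntegral_Ici_eq_one_sub_of_eq_integral_Iic (hρ : Integrable ρ) (hρ1 : ∫ x, ρ x = 1)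
    (hΦ : ∀ x, Φ x = ∫ t in Iic x, ρ t) (x : ℝ) :
    ∫ t in Ici x, ρ t = 1 - Φ x := by
  have := integral_add_compl (measurableSet_Iic (a := x)) hρ
  rw [compl_Iic, hρ1, ← hΦ, ← integral_Ici_eq_integral_Ioi] at this
  linarith

lemma integrable_and_integral_Ioc_mul_of_integrableOn_Ioi (hρ0 : ∀ x, 0 ≤ ρ x)
    (hρ : Integrable ρ) (hρ1 : ∫ x, ρ x = 1) (hΦ : ∀ x, Φ x = ∫ t in Iic x, ρ t)
    (hg : AEStronglyMeasurable g) {a : ℝ} (hint : IntegrableOn (fun t => g t * (1 - Φ t)) (Ioi a)) :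
    Integrable (fun x => (∫ t in Ioc a x, g t) * ρ x) ∧
      ∫ x, (∫ t in Ioc a x, g t) * ρ x = ∫ t in Ioi a, g t * (1 - Φ t) := by
  -- the triangle `a < t ≤ x` is the relation `t ≤ x` under the measure restricted to `t > a`
  have hS : MeasurableSet {p : ℝ × ℝ | p.1 ≤ p.2} :=
    measurableSet_le measurable_fst measurable_snd
  have hsec_t (x : ℝ) :
      ∫ t in {t | (t, x) ∈ {p : ℝ × ℝ | p.1 ≤ p.2}}, g t ∂volume.restrict (Ioi a) =
        ∫ t in Ioc a x, g t := by
    change ∫ t in Iic x, g t ∂volume.restrict (Ioi a) = _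
    rw [Measure.restrict_restrict measurableSet_Iic, inter_comm, Ioi_inter_Iic]
  have hsec_x (t : ℝ) : ∫ x in {x | (t, x) ∈ {p : ℝ × ℝ | p.1 ≤ p.2}}, ρ x = 1 - Φ t :=
    setIntegral_Ici_eq_one_sub_of_eq_integral_Iic hρ hρ1 hΦ t
  have hint' : IntegrableOn (fun t => g t * ∫ x in {x | (t, x) ∈ {p : ℝ × ℝ | p.1 ≤ p.2}}, ρ x)
      (Ioi a) := by
    simpa only [hsec_x] using hint
  refine ⟨?_, ?_⟩
  · simpa only [hsec_t] using integrable_setIntegral_mul_of_prod hS hg.restrict hρ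
      (.of_forall hρ0) hint'
  · simpa only [hsec_t, hsec_x] using
      integral_setIntegral_mul_comm hS hg.restrict hρ (.of_forall hρ0) hint'

lemma integrable_and_integral_Ioc_mul_of_integrableOn_Iic (hρ0 : ∀ x, 0 ≤ ρ x)
    (hρ : Integrable ρ) (hΦ : ∀ x, Φ x = ∫ t in Iic x, ρ t) (hg : AEStronglyMeasurable g)
    {a : ℝ} (hint : IntegrableOn (fun t => g t * Φ t) (Iic a)) :
    Integrable (fun x => (∫ t in Ioc x a, g t) * ρ x) ∧
      ∫ x, (∫ t in Ioc x a, g t) * ρ x = ∫ t in Iic a, g t * Φ t := by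
  have hS : MeasurableSet {p : ℝ × ℝ | p.2 < p.1} :=
    measurableSet_lt measurable_snd measurable_fst
  have hsec_t (x : ℝ) :
      ∫ t in {t | (t, x) ∈ {p : ℝ × ℝ | p.2 < p.1}}, g t ∂volume.restrict (Iic a) =
        ∫ t in Ioc x a, g t := by
    change ∫ t in Ioi x, g t ∂volume.restrict (Iic a) = _
    rw [Measure.restrict_restrict measurableSet_Ioi, Ioi_inter_Iic]
  have hsec_x (t : ℝ) : ∫ x in {x | (t, x) ∈ {p : ℝ × ℝ | p.2 < p.1}}, ρ x = Φ t :=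
    setIntegral_Iio_eq_of_eq_integral_Iic hΦ t
  have hint' : IntegrableOn (fun t => g t * ∫ x in {x | (t, x) ∈ {p : ℝ × ℝ | p.2 < p.1}}, ρ x)
      (Iic a) := by
    simpa only [hsec_x] using hint
  refine ⟨?_, ?_⟩
  · simpa only [hsec_t] using integrable_setIntegral_mul_of_prod hS hg.restrict hρ
      (.of_forall hρ0) hint'
  · simpa only [hsec_t, hsec_x] using
      integral_setIntegral_mul_comm hS hg.restrict hρ (.of_forall hρ0) hint'

lemma integrable_and_integral_intervalIntegral_mul (hρ0 : ∀ x, 0 ≤ ρ x) (hρ : Integrable ρ)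
    (hρ1 : ∫ x, ρ x = 1) (hΦ : ∀ x, Φ x = ∫ t in Iic x, ρ t) (hg : AEStronglyMeasurable g)
    {a : ℝ} (hl : IntegrableOn (fun t => g t * Φ t) (Iic a))
    (hr : IntegrableOn (fun t => g t * (1 - Φ t)) (Ioi a)) :
    Integrable (fun x => (∫ t in a..x, g t) * ρ x) ∧
      ∫ x, (∫ t in a..x, g t) * ρ x =
        (∫ t in Ioi a, g t * (1 - Φ t)) - ∫ t in Iic a, g t * Φ t := by
  obtain ⟨hr_int, hr_eq⟩ :=
    integrable_and_integral_Ioc_mul_of_integrableOn_Ioi hρ0 hρ hρ1 hΦ hg hr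
  obtain ⟨hl_int, hl_eq⟩ := integrable_and_integral_Ioc_mul_of_integrableOn_Iic hρ0 hρ hΦ hg hl
  -- `∫ t in a..x` is by definition `∫ t in Ioc a x - ∫ t in Ioc x a`
  have hsplit : (fun x => (∫ t in a..x, g t) * ρ x) =
      fun x => (∫ t in Ioc a x, g t) * ρ x - (∫ t in Ioc x a, g t) * ρ x :=
    funext fun x => sub_mul _ _ _
  rw [hsplit, integral_sub hr_int hl_int, hr_eq, hl_eq]
  exact ⟨hr_int.sub hl_int, rfl⟩

end Distribution

theorem stmt17_general (ρ ψ Φ g : ℝ → ℝ)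
    (hρpos : ∀ x, 0 < ρ x) (hρint : Integrable ρ) (hρ1 : ∫ x, ρ x = 1)
    (hψpos : ∀ x, 0 < ψ x)
    (hΦ : ∀ x, Φ x = ∫ t in Iic x, ρ t)
    (hgmeas : AEStronglyMeasurable g volume)
    (hgL2 : Integrable (fun t => g t ^ 2 * ψ t)) :
    ∀ a : ℝ,
      IntegrableOn (fun t => Φ t ^ 2 / ψ t) (Iic a) →
      IntegrableOn (fun t => (1 - Φ t) ^ 2 / ψ t) (Ici a) →
      Integrable (fun x => (∫ t in a..x, g t) * ρ x) ∧
      |∫ x, (∫ t in a..x, g t) * ρ x| ≤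
        Real.sqrt (∫ t, g t ^ 2 * ψ t) *
          (Real.sqrt (∫ t in Iic a, Φ t ^ 2 / ψ t)
            + Real.sqrt (∫ t in Ici a, (1 - Φ t) ^ 2 / ψ t)) := by
  intro a hΦa h1Φa
  have hρ0 (x : ℝ) : 0 ≤ ρ x := (hρpos x).le
  have hΦm : Measurable Φ := (monotone_of_eq_integral_Iic hρ0 hρint hΦ).measurable
  have h1Φa' : IntegrableOn (fun t => (1 - Φ t) ^ 2 / ψ t) (Ioi a) :=
    h1Φa.mono_set Ioi_subset_Ici_self
  have hl : IntegrableOn (fun t => g t * Φ t) (Iic a) :=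
    hgL2.restrict.mul_of_sq_mul_of_sq_div hψpos hΦa
      (hgmeas.mul hΦm.aestronglyMeasurable).restrict
  have hr : IntegrableOn (fun t => g t * (1 - Φ t)) (Ioi a) :=
    hgL2.restrict.mul_of_sq_mul_of_sq_div hψpos h1Φa'
      (hgmeas.mul (measurable_const.sub hΦm).aestronglyMeasurable).restrict
  obtain ⟨hint, heq⟩ :=
    integrable_and_integral_intervalIntegral_mul hρ0 hρint hρ1 hΦ hgmeas hl hr
  refine ⟨hint, ?_⟩
  calc |∫ x, (∫ t in a..x, g t) * ρ x|
      ≤ |∫ t in Ioi a, g t * (1 - Φ t)| + |∫ t in Iic a, g t * Φ t| := heq ▸ abs_sub _ _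
    _ ≤ √(∫ t, g t ^ 2 * ψ t) * √(∫ t in Ioi a, (1 - Φ t) ^ 2 / ψ t)
          + √(∫ t, g t ^ 2 * ψ t) * √(∫ t in Iic a, Φ t ^ 2 / ψ t) :=
      add_le_add (abs_setIntegral_mul_le_sqrt_mul_sqrt hψpos hgL2 h1Φa')
        (abs_setIntegral_mul_le_sqrt_mul_sqrt hψpos hgL2 hΦa)
    _ = _ := by rw [← integral_Ici_eq_integral_Ioi]; ring

theorem stmt17 (ρ ψ Φ g : ℝ → ℝ)
    (hρpos : ∀ x, 0 < ρ x) (hρint : Integrable ρ) (hρ1 : ∫ x, ρ x = 1)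
    (hψpos : ∀ x, 0 < ψ x)
    (hψloc : LocallyIntegrable ψ)
    (hψinvloc : LocallyIntegrable (fun x => 1 / ψ x))
    (hΦ : ∀ x, Φ x = ∫ t in Iic x, ρ t)
    (hgmeas : AEStronglyMeasurable g volume)
    (hgL2 : Integrable (fun t => g t ^ 2 * ψ t)) :
    ∀ a : ℝ,
      IntegrableOn (fun t => Φ t ^ 2 / ψ t) (Iic a) →
      IntegrableOn (fun t => (1 - Φ t) ^ 2 / ψ t) (Ici a) →
      Integrable (fun x => (∫ t in a..x, g t) * ρ x) ∧
      |∫ x, (∫ t in a..x, g t) * ρ x| ≤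
        Real.sqrt (∫ t, g t ^ 2 * ψ t) *
          (Real.sqrt (∫ t in Iic a, Φ t ^ 2 / ψ t)
            + Real.sqrt (∫ t in Ici a, (1 - Φ t) ^ 2 / ψ t)) :=
  stmt17_general ρ ψ Φ g hρpos hρint hρ1 hψpos hΦ hgmeas hgL2
end

section
/- Under the weaker condition, the 1-dimensional ANOVA space 𝒲 = {f locally integrable : f ∈ L¹_ρ, f' ∈ L²_ψ}, with norm ‖f‖²_𝒲 = |∫ f ρ|² + (1/γ)∫|f'|²ψ, is complete: every Cauchy sequence in 𝒲 converges in 𝒲. -/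
/-!
The 𝒲-norm only sees the mean `∫ f ρ` and the derivative in `L²(ψ)`. A Cauchy sequence therefore
yields a limit mean `l` and, through the isometry `g ↦ g √ψ` onto the complete space `L²`, a limit
derivative `G` with `∫ G² ψ < ∞`; by AM–GM against `1/ψ` it is locally integrable. The candidate
limit is `F = C + ∫₀ˣ G`, and the only issue is `F ∈ L¹_ρ`. By Tonelli,
`∫ ρ(y) ∫_{Ι 0 y} |G| dy = ∫_{t > 0} |G| (1 - Φ) + ∫_{t ≤ 0} |G| Φ`,
and AM–GM bounds the two terms by `∫ G² ψ` plus `∫ (1 - Φ)² / ψ` resp. `∫ Φ² / ψ`, which are finite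
by the weak condition. Finally `C` is chosen so that `∫ F ρ = l`.
-/

open MeasureTheory Real Set Filter

/-- Membership of the pair (f, g) — a function together with its weak derivative —
in the one-dimensional unanchored ANOVA space 𝒲. -/
def memW (ρ ψ : ℝ → ℝ) (f g : ℝ → ℝ) : Prop :=
  LocallyIntegrable f ∧
  LocallyIntegrable g ∧
  (∀ a b : ℝ, f b - f a = ∫ t in a..b, g t) ∧
  Integrable (fun x => |f x| * ρ x) ∧
  Integrable (fun x => g x ^ 2 * ψ x)

/-- The 𝒲-norm of a function f with weak derivative g. -/
noncomputable def Wnorm (ρ ψ : ℝ → ℝ) (γ : ℝ) (f g : ℝ → ℝ) : ℝ :=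
  Real.sqrt ((∫ x, f x * ρ x) ^ 2 + (1 / γ) * ∫ x, g x ^ 2 * ψ x)

open scoped Interval

lemma abs_mul_le_sq_mul_add_sq_div (a b : ℝ) {c : ℝ} (hc : 0 < c) :
    |a * b| ≤ (a ^ 2 * c + b ^ 2 / c) / 2 := by
  have hgap : a ^ 2 * c + b ^ 2 / c - 2 * |a * b| = (|a| * c - |b|) ^ 2 / c := by
    field_simp
    rw [abs_mul]
    ring_nf
    simp only [sq_abs]
    ring
  have : 0 ≤ (|a| * c - |b|) ^ 2 / c := by positivity
  linarith

section General

variable {α : Type*} [MeasurableSpace α] {μ : Measure α}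

lemma integrable_mul_of_sq_mul_of_sq_div_s18 {G w ψ : α → ℝ} (hG : AEStronglyMeasurable G μ)
    (hw : AEStronglyMeasurable w μ) (hψ : ∀ x, 0 < ψ x)
    (hGψ : Integrable (fun x => G x ^ 2 * ψ x) μ) (hwψ : Integrable (fun x => w x ^ 2 / ψ x) μ) :
    Integrable (fun x => G x * w x) μ :=
  ((hGψ.add hwψ).div_const 2).mono' (hG.mul hw)
    (ae_of_all _ fun x => abs_mul_le_sq_mul_add_sq_div _ _ (hψ x))

lemma locallyIntegrable_of_integrable_sq_mul [TopologicalSpace α] {G ψ : α → ℝ}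
    (hG : AEStronglyMeasurable G μ) (hψ : ∀ x, 0 < ψ x)
    (hGψ : Integrable (fun x => G x ^ 2 * ψ x) μ) (hψinv : LocallyIntegrable (fun x => 1 / ψ x) μ) :
    LocallyIntegrable G μ := by
  refine (hGψ.locallyIntegrable.add hψinv).mono hG (ae_of_all _ fun x => ?_)
  have hnn : 0 ≤ G x ^ 2 * ψ x + 1 / ψ x := by have := hψ x; positivity
  calc ‖G x‖ = |G x * 1| := by rw [mul_one, Real.norm_eq_abs]
    _ ≤ (G x ^ 2 * ψ x + 1 ^ 2 / ψ x) / 2 := abs_mul_le_sq_mul_add_sq_div _ _ (hψ x)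
    _ ≤ ‖G x ^ 2 * ψ x + 1 / ψ x‖ := by rw [one_pow, Real.norm_eq_abs, abs_of_nonneg hnn]; linarith

lemma L2.norm_sq_eq_integral_sq_of_ae_eq {U : Lp ℝ 2 μ} {u : α → ℝ} (hu : U =ᵐ[μ] u) :
    ‖U‖ ^ 2 = ∫ x, u x ^ 2 ∂μ := by
  rw [← real_inner_self_eq_norm_sq, L2.inner_def]
  refine integral_congr_ae ?_
  filter_upwards [hu] with x hx
  simp [hx, sq]

lemma exists_tendsto_integral_sq_mul_of_cauchy {ψ : α → ℝ} (hψm : AEStronglyMeasurable ψ μ)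
    (hψ : ∀ x, 0 < ψ x) {g : ℕ → α → ℝ} (hg : ∀ n, AEStronglyMeasurable (g n) μ)
    (hgψ : ∀ n, Integrable (fun x => g n x ^ 2 * ψ x) μ)
    (hcauchy : ∀ ε > 0, ∃ N, ∀ m ≥ N, ∀ k ≥ N, ∫ x, (g m x - g k x) ^ 2 * ψ x ∂μ < ε) :
    ∃ G : α → ℝ, AEStronglyMeasurable G μ ∧ Integrable (fun x => G x ^ 2 * ψ x) μ ∧
      Tendsto (fun n => ∫ x, (g n x - G x) ^ 2 * ψ x ∂μ) atTop (nhds 0) := by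
  have hsqrt : AEStronglyMeasurable (fun x => √(ψ x)) μ :=
    continuous_sqrt.comp_aestronglyMeasurable hψm
  have hsq : ∀ u v x, (u * √(ψ x) - v * √(ψ x)) ^ 2 = (u - v) ^ 2 * ψ x := fun u v x => by
    rw [← sub_mul, mul_pow, sq_sqrt (hψ x).le]
  have hmem : ∀ n, MemLp (fun x => g n x * √(ψ x)) 2 μ := fun n =>
    (memLp_two_iff_integrable_sq ((hg n).mul hsqrt)).2 <| by
      simpa only [Pi.mul_apply, mul_pow, sq_sqrt (hψ _).le] using hgψ n
  set e : ℕ → Lp ℝ 2 μ := fun n => (hmem n).toLp _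
  have he : ∀ n, e n =ᵐ[μ] fun x => g n x * √(ψ x) := fun n => (hmem n).coeFn_toLp
  have hcauchy_e : CauchySeq e := by
    refine Metric.cauchySeq_iff.2 fun ε hε => ?_
    obtain ⟨N, hN⟩ := hcauchy (ε ^ 2) (by positivity)
    refine ⟨N, fun m hm k hk => ?_⟩
    have hnorm : ‖e m - e k‖ ^ 2 = ∫ x, (g m x - g k x) ^ 2 * ψ x ∂μ := by
      rw [L2.norm_sq_eq_integral_sq_of_ae_eq (u := fun x => g m x * √(ψ x) - g k x * √(ψ x))]
      · simp only [hsq]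
      · filter_upwards [Lp.coeFn_sub (e m) (e k), he m, he k] with x hx hm hk
        rw [hx, Pi.sub_apply, hm, hk]
    rw [dist_eq_norm]
    exact lt_of_pow_lt_pow_left₀ 2 hε.le (hnorm ▸ hN m hm k hk)
  obtain ⟨E, hE⟩ := cauchySeq_tendsto_of_complete hcauchy_e
  set G : α → ℝ := fun x => E x / √(ψ x)
  have hGE : ∀ x, G x * √(ψ x) = E x := fun x =>
    div_mul_cancel₀ _ (sqrt_pos.2 (hψ x)).ne'
  refine ⟨G, (Lp.aestronglyMeasurable E).div₀ hsqrt, ?_, ?_⟩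
  · refine (Lp.memLp E).integrable_sq.congr (ae_of_all _ fun x => ?_)
    simp only [← hGE x, mul_pow, sq_sqrt (hψ x).le]
  · have hnorm : ∀ n, ‖e n - E‖ ^ 2 = ∫ x, (g n x - G x) ^ 2 * ψ x ∂μ := fun n => by
      rw [L2.norm_sq_eq_integral_sq_of_ae_eq (u := fun x => g n x * √(ψ x) - G x * √(ψ x))]
      · simp only [hsq]
      · filter_upwards [Lp.coeFn_sub (e n) E, he n] with x hx hn
        rw [hx, Pi.sub_apply, hn, hGE]
    simp only [← hnorm]
    simpa using ((tendsto_iff_norm_sub_tendsto_zero.1 hE).pow 2)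

lemma integrable_mul_setIntegral_of_swap {β : Type*} [MeasurableSpace β] {ν : Measure β}
    [SFinite μ] [SFinite ν] {S : Set (α × β)}
    (hS : MeasurableSet S) {ρ : α → ℝ} {W : β → ℝ} (hρ : Integrable ρ μ) (hρ0 : ∀ y, 0 ≤ ρ y)
    (hW : AEStronglyMeasurable W ν) (hW0 : ∀ t, 0 ≤ W t)
    (h : Integrable (fun t => W t * ∫ y in (fun y => (y, t)) ⁻¹' S, ρ y ∂μ) ν) :
    Integrable (fun y => ρ y * ∫ t in Prod.mk y ⁻¹' S, W t ∂ν) μ := by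
  set k : α × β → ℝ := S.indicator fun p => ρ p.1 * W p.2
  have hk0 : ∀ p, 0 ≤ k p := fun p => indicator_nonneg (fun p _ => mul_nonneg (hρ0 _) (hW0 _)) p
  have hcol : ∀ t, (fun y => k (y, t)) = ((fun y => (y, t)) ⁻¹' S).indicator fun y => ρ y * W t :=
    fun t => by ext y; by_cases h : (y, t) ∈ S <;> simp [k, h]
  have hrow : ∀ y, (fun t => k (y, t)) = (Prod.mk y ⁻¹' S).indicator fun t => ρ y * W t :=
    fun y => by ext t; by_cases h : (y, t) ∈ S <;> simp [k, h]
  have hcol_meas : ∀ t, MeasurableSet ((fun y => (y, t)) ⁻¹' S) := fun t =>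
    hS.preimage (measurable_id.prodMk measurable_const)
  have hkm : AEStronglyMeasurable k (μ.prod ν) :=
    (hρ.aestronglyMeasurable.comp_fst.mul hW.comp_snd).indicator hS
  have hk : Integrable k (μ.prod ν) := by
    refine (integrable_prod_iff' hkm).2 ⟨ae_of_all _ fun t => ?_, ?_⟩
    · rw [hcol t]
      exact (hρ.mul_const (W t)).indicator (hcol_meas t)
    · refine h.congr (ae_of_all _ fun t => ?_)
      simp only [Real.norm_eq_abs, abs_of_nonneg (hk0 _)]
      rw [hcol t, integral_indicator (hcol_meas t), integral_mul_const, mul_comm]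
  refine hk.integral_prod_left.congr (ae_of_all _ fun y => ?_)
  simp only
  rw [hrow y, integral_indicator (measurable_prodMk_left hS), integral_const_mul]

end General

lemma setOf_mem_uIoc_of_lt {a t : ℝ} (ht : a < t) : {y | t ∈ Ι a y} = Ici t := by
  ext y
  simp only [mem_uIoc, mem_Ici]
  constructor
  · rintro (⟨-, h⟩ | ⟨-, h⟩) <;> linarith
  · exact fun h => Or.inl ⟨ht, h⟩

lemma setOf_mem_uIoc_of_le {a t : ℝ} (ht : t ≤ a) : {y | t ∈ Ι a y} = Iio t := by
  ext y
  simp only [mem_uIoc, mem_Iio]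
  constructor
  · rintro (⟨h, -⟩ | ⟨h, -⟩) <;> linarith
  · exact fun h => Or.inr ⟨h, ht⟩

lemma integrable_mul_setIntegral_uIoc {ρ W : ℝ → ℝ} (a : ℝ) (hρ : Integrable ρ) (hρ0 : ∀ y, 0 ≤ ρ y)
    (hW : AEStronglyMeasurable W) (hW0 : ∀ t, 0 ≤ W t)
    (hright : IntegrableOn (fun t => W t * ∫ y in Ici t, ρ y) (Ioi a))
    (hleft : IntegrableOn (fun t => W t * ∫ y in Iio t, ρ y) (Iic a)) :
    Integrable (fun y => ρ y * ∫ t in Ι a y, W t) := by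
  have hS : MeasurableSet {p : ℝ × ℝ | p.2 ∈ Ι a p.1} :=
    (measurableSet_lt (by fun_prop) measurable_snd).inter
      (measurableSet_le measurable_snd (by fun_prop))
  refine integrable_mul_setIntegral_of_swap hS hρ hρ0 hW hW0 ?_
  rw [← integrableOn_univ, ← Iic_union_Ioi (a := a), integrableOn_union]
  refine ⟨hleft.congr_fun (fun t ht => ?_) measurableSet_Iic,
    hright.congr_fun (fun t ht => ?_) measurableSet_Ioi⟩
  · simp [preimage, setOf_mem_uIoc_of_le (mem_Iic.1 ht)]
  · simp [preimage, setOf_mem_uIoc_of_lt (mem_Ioi.1 ht)]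

lemma setIntegral_Ici_eq_one_sub {ρ Φ : ℝ → ℝ} (hρ : Integrable ρ) (hρ1 : ∫ x, ρ x = 1)
    (hΦ : ∀ x, Φ x = ∫ t in Iic x, ρ t) (t : ℝ) : ∫ y in Ici t, ρ y = 1 - Φ t := by
  rw [hΦ, ← hρ1, ← integral_add_compl measurableSet_Iic hρ, compl_Iic, integral_Ici_eq_integral_Ioi]
  ring

lemma integrable_mul_setIntegral_uIoc_abs {ρ ψ Φ G : ℝ → ℝ}
    (hρ0 : ∀ x, 0 ≤ ρ x) (hρint : Integrable ρ) (hρ1 : ∫ x, ρ x = 1) (hψpos : ∀ x, 0 < ψ x)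
    (hΦ : ∀ x, Φ x = ∫ t in Iic x, ρ t)
    (hleft : IntegrableOn (fun t => Φ t ^ 2 / ψ t) (Iic 0))
    (hright : IntegrableOn (fun t => (1 - Φ t) ^ 2 / ψ t) (Ici 0))
    (hG : AEStronglyMeasurable G) (hGψ : Integrable (fun x => G x ^ 2 * ψ x)) :
    Integrable (fun y => ρ y * ∫ t in Ι 0 y, |G t|) := by
  have hΦm : Measurable Φ := by
    refine Monotone.measurable fun s t hst => ?_
    rw [hΦ, hΦ]
    exact setIntegral_mono_set hρint.integrableOn (ae_of_all _ hρ0)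
      (Iic_subset_Iic.2 hst).eventuallyLE
  have hGabs : AEStronglyMeasurable (fun x => |G x|) := continuous_abs.comp_aestronglyMeasurable hG
  have hGψ' : Integrable (fun x => |G x| ^ 2 * ψ x) := by simpa only [sq_abs] using hGψ
  refine integrable_mul_setIntegral_uIoc 0 hρint hρ0 hGabs (fun t => abs_nonneg _) ?_ ?_
  · simp only [setIntegral_Ici_eq_one_sub hρint hρ1 hΦ]
    exact integrable_mul_of_sq_mul_of_sq_div_s18 hGabs.restrict
      (measurable_const.sub hΦm).aestronglyMeasurable hψpos hGψ'.integrableOn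
      (hright.mono_set Ioi_subset_Ici_self)
  · simp only [← integral_Iic_eq_integral_Iio, ← hΦ]
    exact integrable_mul_of_sq_mul_of_sq_div_s18 hGabs.restrict hΦm.aestronglyMeasurable hψpos
      hGψ'.integrableOn hleft

lemma exists_memW_integral_mul_eq {ρ ψ Φ G : ℝ → ℝ}
    (hρ0 : ∀ x, 0 ≤ ρ x) (hρint : Integrable ρ) (hρ1 : ∫ x, ρ x = 1) (hψpos : ∀ x, 0 < ψ x)
    (hψinvloc : LocallyIntegrable (fun x => 1 / ψ x))
    (hΦ : ∀ x, Φ x = ∫ t in Iic x, ρ t)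
    (hleft : IntegrableOn (fun t => Φ t ^ 2 / ψ t) (Iic 0))
    (hright : IntegrableOn (fun t => (1 - Φ t) ^ 2 / ψ t) (Ici 0))
    (hG : AEStronglyMeasurable G) (hGψ : Integrable (fun x => G x ^ 2 * ψ x)) (l : ℝ) :
    ∃ F : ℝ → ℝ, memW ρ ψ F G ∧ ∫ x, F x * ρ x = l := by
  have hGloc : LocallyIntegrable G := locallyIntegrable_of_integrable_sq_mul hG hψpos hGψ hψinvloc
  have hGii : ∀ p q : ℝ, IntervalIntegrable G volume p q := fun p q =>
    (hGloc.integrableOn_isCompact isCompact_uIcc).intervalIntegrable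
  set P : ℝ → ℝ := fun x => ∫ t in (0 : ℝ)..x, G t
  have hP : Continuous P := intervalIntegral.continuous_primitive hGii 0
  have hρP : Integrable (fun y => P y * ρ y) := by
    refine (integrable_mul_setIntegral_uIoc_abs hρ0 hρint hρ1 hψpos hΦ hleft hright hG hGψ).mono'
      (hP.aestronglyMeasurable.mul hρint.aestronglyMeasurable) (ae_of_all _ fun y => ?_)
    rw [norm_mul, Real.norm_of_nonneg (hρ0 y), mul_comm]
    exact mul_le_mul_of_nonneg_left intervalIntegral.norm_integral_le_integral_norm_uIoc (hρ0 y)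
  set C : ℝ := l - ∫ y, P y * ρ y
  have hFρ : Integrable (fun x => (C + P x) * ρ x) :=
    ((hρint.const_mul C).add hρP).congr (ae_of_all _ fun x => (add_mul _ _ _).symm)
  refine ⟨fun x => C + P x, ⟨(continuous_const.add hP).locallyIntegrable, hGloc, fun p q => ?_,
    ?_, hGψ⟩, ?_⟩
  · rw [add_sub_add_left_eq_sub]
    exact intervalIntegral.integral_interval_sub_left (hGii 0 q) (hGii 0 p)
  · refine hFρ.abs.congr (ae_of_all _ fun x => ?_)
    simp only [abs_mul, abs_of_nonneg (hρ0 x)]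
  · rw [integral_congr_ae (ae_of_all _ fun x => add_mul C (P x) (ρ x)),
      integral_add (hρint.const_mul C) hρP, integral_const_mul, hρ1]
    ring

lemma memW.integrable_mul {ρ ψ f g : ℝ → ℝ} (hfg : memW ρ ψ f g) (hρ : AEStronglyMeasurable ρ)
    (hρ0 : ∀ x, 0 ≤ ρ x) : Integrable (fun x => f x * ρ x) :=
  hfg.2.2.2.1.mono' (hfg.1.aestronglyMeasurable.mul hρ)
    (ae_of_all _ fun x => by rw [norm_mul, Real.norm_eq_abs, Real.norm_of_nonneg (hρ0 x)])

lemma integral_sub_mul {ρ f F : ℝ → ℝ} (hf : Integrable (fun x => f x * ρ x))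
    (hF : Integrable (fun x => F x * ρ x)) :
    ∫ x, (f - F) x * ρ x = (∫ x, f x * ρ x) - ∫ x, F x * ρ x := by
  simp only [Pi.sub_apply, sub_mul]
  exact integral_sub hf hF

lemma abs_integral_mul_le_Wnorm {ρ ψ : ℝ → ℝ} {γ : ℝ} (hγ : 0 ≤ γ) (hψ : ∀ x, 0 ≤ ψ x)
    (f g : ℝ → ℝ) : |∫ x, f x * ρ x| ≤ Wnorm ρ ψ γ f g := by
  rw [← sqrt_sq_eq_abs]
  refine sqrt_le_sqrt (le_add_of_nonneg_right (mul_nonneg (by positivity) ?_))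
  exact integral_nonneg fun x => mul_nonneg (sq_nonneg _) (hψ x)

lemma integral_sq_mul_le_mul_Wnorm_sq {ρ ψ : ℝ → ℝ} {γ : ℝ} (hγ : 0 < γ) (hψ : ∀ x, 0 ≤ ψ x)
    (f g : ℝ → ℝ) : ∫ x, g x ^ 2 * ψ x ≤ γ * Wnorm ρ ψ γ f g ^ 2 := by
  have hT : 0 ≤ ∫ x, g x ^ 2 * ψ x := integral_nonneg fun x => mul_nonneg (sq_nonneg _) (hψ x)
  rw [Wnorm, sq_sqrt (by positivity)]
  have := sq_nonneg (∫ x, f x * ρ x)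
  field_simp
  nlinarith

lemma cauchySeq_integral_mul_of_Wnorm {ρ ψ : ℝ → ℝ} {γ : ℝ} (hγ : 0 ≤ γ) (hψ : ∀ x, 0 ≤ ψ x)
    {f g : ℕ → ℝ → ℝ} (hf : ∀ n, Integrable (fun x => f n x * ρ x))
    (hCauchy : ∀ ε : ℝ, 0 < ε → ∃ N : ℕ, ∀ m ≥ N, ∀ k ≥ N,
        Wnorm ρ ψ γ (f m - f k) (g m - g k) < ε) :
    CauchySeq fun n => ∫ x, f n x * ρ x := by
  refine Metric.cauchySeq_iff.2 fun ε hε => ?_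
  obtain ⟨N, hN⟩ := hCauchy ε hε
  refine ⟨N, fun m hm k hk => ?_⟩
  have := (abs_integral_mul_le_Wnorm hγ hψ _ _).trans_lt (hN m hm k hk)
  rwa [integral_sub_mul (hf m) (hf k), ← Real.dist_eq] at this

lemma integral_sq_mul_cauchy_of_Wnorm {ρ ψ : ℝ → ℝ} {γ : ℝ} (hγ : 0 < γ) (hψ : ∀ x, 0 ≤ ψ x)
    {f g : ℕ → ℝ → ℝ}
    (hCauchy : ∀ ε : ℝ, 0 < ε → ∃ N : ℕ, ∀ m ≥ N, ∀ k ≥ N,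
        Wnorm ρ ψ γ (f m - f k) (g m - g k) < ε) :
    ∀ ε : ℝ, 0 < ε → ∃ N : ℕ, ∀ m ≥ N, ∀ k ≥ N, ∫ x, (g m x - g k x) ^ 2 * ψ x < ε := by
  intro ε hε
  obtain ⟨N, hN⟩ := hCauchy √(ε / γ) (by positivity)
  refine ⟨N, fun m hm k hk => ?_⟩
  calc ∫ x, (g m x - g k x) ^ 2 * ψ x
      ≤ γ * Wnorm ρ ψ γ (f m - f k) (g m - g k) ^ 2 :=
        integral_sq_mul_le_mul_Wnorm_sq hγ hψ _ (g m - g k)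
    _ < γ * √(ε / γ) ^ 2 :=
      mul_lt_mul_of_pos_left (pow_lt_pow_left₀ (hN m hm k hk) (sqrt_nonneg _) two_ne_zero) hγ
    _ = ε := by rw [sq_sqrt (by positivity)]; field_simp

lemma tendsto_Wnorm_sub {ρ ψ : ℝ → ℝ} {γ : ℝ} {f g : ℕ → ℝ → ℝ} {F G : ℝ → ℝ}
    (hf : ∀ n, Integrable (fun x => f n x * ρ x)) (hF : Integrable (fun x => F x * ρ x))
    (hmean : Tendsto (fun n => ∫ x, f n x * ρ x) atTop (nhds (∫ x, F x * ρ x)))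
    (hgrad : Tendsto (fun n => ∫ x, (g n x - G x) ^ 2 * ψ x) atTop (nhds 0)) :
    Tendsto (fun n => Wnorm ρ ψ γ (f n - F) (g n - G)) atTop (nhds 0) := by
  have hW : ∀ n, Wnorm ρ ψ γ (f n - F) (g n - G) =
      √(((∫ x, f n x * ρ x) - ∫ x, F x * ρ x) ^ 2 + 1 / γ * ∫ x, (g n x - G x) ^ 2 * ψ x) :=
    fun n => by rw [Wnorm, integral_sub_mul (hf n) hF]; rfl
  simp only [hW]
  simpa using ((hmean.sub_const (∫ x, F x * ρ x)).pow 2).add (hgrad.const_mul (1 / γ)) |>.sqrt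

theorem stmt18_general (ρ ψ Φ : ℝ → ℝ) (γ : ℝ) (hγ : 0 < γ)
    (hρpos : ∀ x, 0 < ρ x) (hρint : Integrable ρ) (hρ1 : ∫ x, ρ x = 1)
    (hψpos : ∀ x, 0 < ψ x)
    (hψinvloc : LocallyIntegrable (fun x => 1 / ψ x))
    (hΦ : ∀ x, Φ x = ∫ t in Iic x, ρ t)
    (hweak : ∀ c : ℝ, IntegrableOn (fun t => Φ t ^ 2 / ψ t) (Iic c) ∧
        IntegrableOn (fun t => (1 - Φ t) ^ 2 / ψ t) (Ici c))
    (f g : ℕ → ℝ → ℝ)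
    (hmem : ∀ n, memW ρ ψ (f n) (g n))
    (hCauchy : ∀ ε : ℝ, 0 < ε → ∃ N : ℕ, ∀ m ≥ N, ∀ k ≥ N,
        Wnorm ρ ψ γ (f m - f k) (g m - g k) < ε) :
    ∃ F G : ℝ → ℝ, memW ρ ψ F G ∧
      Tendsto (fun n => Wnorm ρ ψ γ (f n - F) (g n - G)) atTop (nhds 0) := by
  have hρ0 : ∀ x, 0 ≤ ρ x := fun x => (hρpos x).le
  have hψ0 : ∀ x, 0 ≤ ψ x := fun x => (hψpos x).le
  have hψm : AEStronglyMeasurable ψ :=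
    hψinvloc.aestronglyMeasurable.inv₀.congr (ae_of_all _ fun x => by simp)
  have hfρ : ∀ n, Integrable (fun x => f n x * ρ x) := fun n =>
    (hmem n).integrable_mul hρint.aestronglyMeasurable hρ0
  obtain ⟨l, hl⟩ := cauchySeq_tendsto_of_complete <|
    cauchySeq_integral_mul_of_Wnorm hγ.le hψ0 hfρ hCauchy
  obtain ⟨G, hG, hGψ, hgG⟩ := exists_tendsto_integral_sq_mul_of_cauchy hψm hψpos
    (fun n => (hmem n).2.1.aestronglyMeasurable) (fun n => (hmem n).2.2.2.2)
    (integral_sq_mul_cauchy_of_Wnorm hγ hψ0 hCauchy)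
  obtain ⟨F, hF, hFl⟩ := exists_memW_integral_mul_eq hρ0 hρint hρ1 hψpos hψinvloc hΦ
    (hweak 0).1 (hweak 0).2 hG hGψ l
  exact ⟨F, G, hF, tendsto_Wnorm_sub hfρ (hF.integrable_mul hρint.aestronglyMeasurable hρ0)
    (hFl ▸ hl) hgG⟩

theorem stmt18 (ρ ψ Φ : ℝ → ℝ) (γ : ℝ) (hγ : 0 < γ)
    (hρpos : ∀ x, 0 < ρ x) (hρint : Integrable ρ) (hρ1 : ∫ x, ρ x = 1)
    (hψpos : ∀ x, 0 < ψ x)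
    (hψloc : LocallyIntegrable ψ)
    (hψinvloc : LocallyIntegrable (fun x => 1 / ψ x))
    (hΦ : ∀ x, Φ x = ∫ t in Iic x, ρ t)
    (hweak : ∀ c : ℝ, IntegrableOn (fun t => Φ t ^ 2 / ψ t) (Iic c) ∧
        IntegrableOn (fun t => (1 - Φ t) ^ 2 / ψ t) (Ici c))
    (f g : ℕ → ℝ → ℝ)
    (hmem : ∀ n, memW ρ ψ (f n) (g n))
    (hCauchy : ∀ ε : ℝ, 0 < ε → ∃ N : ℕ, ∀ m ≥ N, ∀ k ≥ N,
        Wnorm ρ ψ γ (f m - f k) (g m - g k) < ε) :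
    ∃ F G : ℝ → ℝ, memW ρ ψ F G ∧
      Tendsto (fun n => Wnorm ρ ψ γ (f n - F) (g n - G)) atTop (nhds 0) :=
  stmt18_general ρ ψ Φ γ hγ hρpos hρint hρ1 hψpos hψinvloc hΦ hweak f g hmem hCauchy
end
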